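/- arXiv:1809.06451 — 6 statements merged into one kernel-verified Lean document; each statement's English description precedes it below -/
import Mathlib

section
/- Let S be a finite set of points in the plane such that no 4 points of S are collinear, and such that every subset of S of size ℓ contains 3 collinear points. Then the dual family of lines F (one line per point of S, under an incidence-preserving point-line duality) satisfies the (ℓ,3) property, and any finite family of convex sets with these properties cannot be pierced by fewer than |S|/3 points; consequently c₂(ℓ,3) ≥ |S|/3. -/
/-- A line in the plane, regarded as a set of points. -/
def IsLine (L : Set (ℝ × ℝ)) : Prop :=
  ∃ u v : ℝ × ℝ, v ≠ 0 ∧ L = {x | ∃ t : ℝ, x = u + t • v}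

/-- Solutions of a nontrivial linear equation in the plane are collinear. -/
lemma collinear_line_aux (a b c : ℝ) (hab : a ≠ 0 ∨ b ≠ 0) :
    Collinear ℝ {p : ℝ × ℝ | a * p.1 + b * p.2 = c} := by
  rcases Set.eq_empty_or_nonempty {p : ℝ × ℝ | a * p.1 + b * p.2 = c} with h | ⟨p₀, hp₀⟩
  · rw [h]; exact collinear_empty ℝ _
  · rw [collinear_iff_of_mem hp₀]
    refine ⟨(-b, a), fun p hp => ?_⟩
    have hp' : a * p.1 + b * p.2 = c := hp
    have hp₀' : a * p₀.1 + b * p₀.2 = c := hp₀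
    rcases hab with ha | hb
    · refine ⟨(p.2 - p₀.2) / a, ?_⟩
      have : ((p.2 - p₀.2) / a) • ((-b : ℝ), a) +ᵥ p₀ =
          ((p.2 - p₀.2) / a * (-b) + p₀.1, (p.2 - p₀.2) / a * a + p₀.2) := rfl
      rw [this, Prod.ext_iff]
      constructor <;> field_simp <;> nlinarith [hp', hp₀']
    · refine ⟨(p₀.1 - p.1) / b, ?_⟩
      have : ((p₀.1 - p.1) / b) • ((-b : ℝ), a) +ᵥ p₀ =
          ((p₀.1 - p.1) / b * (-b) + p₀.1, (p₀.1 - p.1) / b * a + p₀.2) := rfl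
      rw [this, Prod.ext_iff]
      constructor <;> field_simp <;> nlinarith [hp', hp₀']

/-- If `S` is a finite planar point set with no 4 collinear points, such that every
`ℓ`-element subset of `S` contains 3 collinear points, then the dual family `F` of
`|S|` lines satisfies the `(ℓ,3)` property and cannot be pierced by fewer than
`|S|/3` points; consequently `c₂(ℓ,3) ≥ |S|/3`. -/
theorem HD_lower_from_general_position (ℓ : ℕ) (S : Finset (ℝ × ℝ))
    (h4 : ∀ T ⊆ S, T.card = 4 → ¬ Collinear ℝ (↑T : Set (ℝ × ℝ)))
    (hℓ : ∀ T ⊆ S, T.card = ℓ →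
      ∃ U ⊆ T, U.card = 3 ∧ Collinear ℝ (↑U : Set (ℝ × ℝ))) :
    ∃ F : Finset (Set (ℝ × ℝ)),
      F.card = S.card ∧ (∀ L ∈ F, IsLine L) ∧
      (∀ G ⊆ F, G.card = ℓ →
        ∃ H ⊆ G, H.card = 3 ∧ (⋂₀ (↑H : Set (Set (ℝ × ℝ)))).Nonempty) ∧
      (∀ P : Finset (ℝ × ℝ), (∀ L ∈ F, ∃ x ∈ P, x ∈ L) →
        (S.card : ℝ) / 3 ≤ P.card) := by
  classical
  -- Step 1: choose a shear parameter `r` so that `p ↦ p.1 + r * p.2` is injective on `S`.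
  obtain ⟨r, hr⟩ : ∃ r : ℝ, ∀ p ∈ S, ∀ q ∈ S, p.1 + r * p.2 = q.1 + r * q.2 → p = q := by
    obtain ⟨r, hr⟩ := Infinite.exists_notMem_finset
      (((S ×ˢ S).filter (fun pq => pq.1.2 ≠ pq.2.2)).image
        (fun pq => (pq.2.1 - pq.1.1) / (pq.1.2 - pq.2.2)))
    refine ⟨r, fun p hp q hq h => ?_⟩
    by_cases h2 : p.2 = q.2
    · have : p.1 = q.1 := by rw [h2] at h; linarith
      exact Prod.ext this h2
    · exfalso
      apply hr
      refine Finset.mem_image.2 ⟨(p, q), Finset.mem_filter.2 ⟨Finset.mem_product.2 ⟨hp, hq⟩, h2⟩, ?_⟩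
      have hne : p.2 - q.2 ≠ 0 := sub_ne_zero.2 h2
      field_simp
      nlinarith [h]
  -- Step 2: the duality map.
  set f : ℝ × ℝ → Set (ℝ × ℝ) := fun p => {x | x.2 = (p.1 + r * p.2) * x.1 - p.2} with hf
  have hinj : Set.InjOn f ↑S := by
    intro p hp q hq h
    have h1 : ((0 : ℝ), -p.2) ∈ f p := by simp [hf]
    have h2 : ((1 : ℝ), (p.1 + r * p.2) * 1 - p.2) ∈ f p := by simp [hf]
    rw [h] at h1 h2
    have e1 : -p.2 = (q.1 + r * q.2) * 0 - q.2 := h1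
    have e2 : (p.1 + r * p.2) * 1 - p.2 = (q.1 + r * q.2) * 1 - q.2 := h2
    exact hr p hp q hq (by nlinarith [e1, e2])
  -- Step 3: concurrency of duals of collinear triples.
  have hconc : ∀ U : Finset (ℝ × ℝ), U ⊆ S → U.card = 3 → Collinear ℝ (↑U : Set (ℝ × ℝ)) →
      (⋂₀ (↑(U.image f) : Set (Set (ℝ × ℝ)))).Nonempty := by
    intro U hUS hU3 hcol
    have hUne : (↑U : Set (ℝ × ℝ)).Nonempty := by
      simp [Finset.coe_nonempty, ← Finset.card_pos, hU3]
    obtain ⟨p₀, hp₀⟩ := hUne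
    rw [collinear_iff_of_mem hp₀] at hcol
    obtain ⟨v, hv⟩ := hcol
    -- pick two distinct points of U to see that `v.1 + r * v.2 ≠ 0`
    obtain ⟨a, ha, b, hb, hab⟩ := Finset.one_lt_card.mp (by omega : 1 < U.card)
    set w : ℝ := v.1 + r * v.2 with hw
    have hwne : w ≠ 0 := by
      intro hw0
      have hw0' : v.1 + r * v.2 = 0 := by rw [← hw]; exact hw0
      apply hab
      obtain ⟨ta, hta⟩ := hv a ha
      obtain ⟨tb, htb⟩ := hv b hb
      have hsa : a.1 + r * a.2 = p₀.1 + r * p₀.2 := by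
        have : a = (ta * v.1 + p₀.1, ta * v.2 + p₀.2) := hta
        rw [this]; simp only; linear_combination ta * hw0'
      have hsb : b.1 + r * b.2 = p₀.1 + r * p₀.2 := by
        have : b = (tb * v.1 + p₀.1, tb * v.2 + p₀.2) := htb
        rw [this]; simp only; linear_combination tb * hw0'
      exact hr a (hUS ha) b (hUS hb) (by rw [hsa, hsb])
    refine ⟨(v.2 / w, (p₀.1 + r * p₀.2) * (v.2 / w) - p₀.2), ?_⟩
    intro L hL
    obtain ⟨p, hpU, rfl⟩ := Finset.mem_image.mp (by exact_mod_cast hL)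
    obtain ⟨t, ht⟩ := hv p hpU
    have hpe : p = (t * v.1 + p₀.1, t * v.2 + p₀.2) := ht
    show ((p₀.1 + r * p₀.2) * (v.2 / w) - p₀.2) = (p.1 + r * p.2) * (v.2 / w) - p.2
    rw [hpe]
    simp only
    field_simp
    ring
  refine ⟨S.image f, Finset.card_image_of_injOn hinj, ?_, ?_, ?_⟩
  · -- every member is a line
    intro L hL
    obtain ⟨p, _, rfl⟩ := Finset.mem_image.mp hL
    refine ⟨((0 : ℝ), -p.2), ((1 : ℝ), p.1 + r * p.2), ?_, ?_⟩
    · intro h; exact one_ne_zero (congrArg Prod.fst h)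
    · ext x
      constructor
      · intro hx
        refine ⟨x.1, ?_⟩
        have : x.2 = (p.1 + r * p.2) * x.1 - p.2 := hx
        have hx1 : (0 : ℝ) + x.1 * 1 = x.1 := by ring
        rw [Prod.ext_iff]
        constructor
        · show x.1 = 0 + x.1 * 1; ring
        · show x.2 = -p.2 + x.1 * (p.1 + r * p.2); rw [this]; ring
      · rintro ⟨t, rfl⟩
        show (((0 : ℝ), -p.2) + t • ((1 : ℝ), p.1 + r * p.2)).2
            = (p.1 + r * p.2) * (((0 : ℝ), -p.2) + t • ((1 : ℝ), p.1 + r * p.2)).1 - p.2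
        simp; ring
  · -- the (ℓ, 3) property
    intro G hG hGcard
    obtain ⟨T, hTS, hTG⟩ := Finset.subset_image_iff.mp hG
    have hTcard : T.card = ℓ := by
      rw [← hGcard, ← hTG]
      exact (Finset.card_image_of_injOn (hinj.mono (by exact_mod_cast hTS))).symm
    obtain ⟨U, hUT, hU3, hUcol⟩ := hℓ T hTS hTcard
    refine ⟨U.image f, ?_, ?_, ?_⟩
    · rw [← hTG]; exact Finset.image_subset_image hUT
    · rw [Finset.card_image_of_injOn (hinj.mono ?_), hU3]
      exact_mod_cast hUT.trans hTS
    · exact hconc U (hUT.trans hTS) hU3 hUcol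
  · -- the piercing lower bound
    intro P hP
    have key : ∀ x : ℝ × ℝ, (S.filter (fun p => x ∈ f p)).card ≤ 3 := by
      intro x
      by_contra hcon
      push_neg at hcon
      obtain ⟨T, hTsub, hT4⟩ := Finset.exists_subset_card_eq (by omega : 4 ≤ (S.filter (fun p => x ∈ f p)).card)
      refine h4 T (hTsub.trans (Finset.filter_subset _ _)) hT4 ?_
      refine Collinear.subset ?_ (collinear_line_aux x.1 (r * x.1 - 1) x.2 ?_)
      · intro p hp
        have hp' : x ∈ f p := (Finset.mem_filter.mp (hTsub (by exact_mod_cast hp))).2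
        have : x.2 = (p.1 + r * p.2) * x.1 - p.2 := hp'
        show x.1 * p.1 + (r * x.1 - 1) * p.2 = x.2
        nlinarith [this]
      · by_cases hx : x.1 = 0
        · right; rw [hx]; norm_num
        · left; exact hx
    have hcover : S ⊆ P.biUnion (fun x => S.filter (fun p => x ∈ f p)) := by
      intro p hp
      obtain ⟨x, hxP, hx⟩ := hP (f p) (Finset.mem_image_of_mem f hp)
      exact Finset.mem_biUnion.2 ⟨x, hxP, Finset.mem_filter.2 ⟨hp, hx⟩⟩
    have hcount : S.card ≤ 3 * P.card := by
      calc S.card ≤ (P.biUnion (fun x => S.filter (fun p => x ∈ f p))).card :=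
            Finset.card_le_card hcover
        _ ≤ ∑ x ∈ P, (S.filter (fun p => x ∈ f p)).card := Finset.card_biUnion_le
        _ ≤ ∑ _x ∈ P, 3 := Finset.sum_le_sum (fun x _ => key x)
        _ = 3 * P.card := by rw [Finset.sum_const, smul_eq_mul, mul_comm]
    have h3 : (S.card : ℝ) ≤ 3 * P.card := by exact_mod_cast hcount
    rw [div_le_iff₀ (by norm_num : (0:ℝ) < 3)]
    linarith
end

section
/- For all integers n ≥ k ≥ 3 and r > k+1, the number of collinear r-tuples of points in the grid [n]^k is at most (k·2^{r+k+1}/r!)·n^{r+k−1}. -/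
/-!
Every collinear set `T` of at least two lattice points lies on a lattice line `b + ℤ v`, where `v`
is a primitive integer vector, and we may take `b` to be the first point of that line in the grid.
Then `T = {b + u v : u ∈ U}` for an `r`-set `U ⊆ {0, …, W}`, `W = ⌊(n - 1) / ‖v‖∞⌋`. For fixed `v`
the lines partition the grid and `r! · C(m, r) ≤ m · W ^ (r - 1)` for a line with `m ≤ W + 1`
points, so `r!` times the number of sets with direction `v` is at most `n ^ k · W ^ (r - 1)`.
At most `2k (2a + 1) ^ (k - 1)` directions have `‖v‖∞ = a`, and since `r ≥ k + 2` their
contribution is `O(n ^ (r - 1) / a²)`, which sums to `O(n ^ (r - 1))` over `a`.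
-/

open Finset
open scoped Nat

lemma factorial_mul_choose_le_mul_pow {m W r : ℕ} (hm : m ≤ W + 1) (hr : r ≠ 0) :
    r ! * m.choose r ≤ m * W ^ (r - 1) := by
  rw [← Nat.descFactorial_eq_factorial_mul_choose]
  obtain ⟨s, rfl⟩ := Nat.exists_eq_succ_of_ne_zero hr
  rcases m with _ | m
  · simp
  rw [Nat.succ_descFactorial_succ, Nat.succ_sub_one]
  exact Nat.mul_le_mul_left _
    ((Nat.descFactorial_le_pow m s).trans (Nat.pow_le_pow_left (by omega) s))

namespace GridLine

section lattice

variable {κ : Type*}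

abbrev castPi (κ : Type*) : (κ → ℤ) →+ (κ → ℝ) := (Int.castAddHom ℝ).compLeft κ

lemma castPi_injective : Function.Injective (castPi κ) :=
  fun _ _ h => funext fun i => by simpa using congrFun h i

theorem exists_eq_add_zsmul_of_collinear {P : Set (κ → ℤ)} {x₀ : κ → ℤ}
    (hx₀ : x₀ ∈ P) (hP : Collinear ℝ (castPi κ '' P)) :
    ∃ v : κ → ℤ, ∀ x ∈ P, ∃ m : ℤ, x = x₀ + m • v := by
  by_cases hsub : P ⊆ {x₀}
  · exact ⟨0, fun x hx => ⟨0, by simpa using hsub hx⟩⟩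
  obtain ⟨y, hyP, hy⟩ := Set.not_subset.mp hsub
  obtain ⟨w, hw⟩ := (collinear_iff_of_mem (Set.mem_image_of_mem _ hx₀)).1 hP
  let Λ : AddSubgroup (κ → ℤ) := (ℝ ∙ w).toAddSubgroup.comap (castPi κ)
  have hmem : ∀ x ∈ P, x - x₀ ∈ Λ := fun x hx => by
    obtain ⟨c, hc⟩ := hw _ (Set.mem_image_of_mem _ hx)
    simp only [Λ, AddSubgroup.mem_comap, Submodule.mem_toAddSubgroup, map_sub, hc,
      vadd_eq_add, add_sub_cancel_right]
    exact Submodule.smul_mem _ c (Submodule.mem_span_singleton_self w)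
  obtain ⟨i₀, hi₀⟩ := Function.ne_iff.mp (sub_ne_zero.mpr hy)
  have hwi₀ : w i₀ ≠ 0 := by
    obtain ⟨c, hc⟩ := Submodule.mem_span_singleton.mp (hmem y hyP)
    intro h
    have := congrFun hc i₀
    simp only [Pi.smul_apply, h, smul_zero, map_sub, Pi.sub_apply] at this
    exact hi₀ (by simpa [sub_eq_zero] using this.symm)
  -- On the line `ℝ ∙ w` a vector is determined by its `i₀`-th coordinate,
  -- so `Λ` embeds into `ℤ` and is therefore cyclic.
  have hinj : Function.Injective ((Pi.evalAddMonoidHom (fun _ => ℤ) i₀).comp Λ.subtype) := by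
    rw [injective_iff_map_eq_zero]
    rintro ⟨z, hz⟩ hz0
    obtain ⟨c, hc⟩ := Submodule.mem_span_singleton.mp hz
    have hc0 : c = 0 := by
      have := congrFun hc i₀
      simp_all
    ext1
    exact castPi_injective (by simp [← hc, hc0])
  have : IsAddCyclic Λ := isAddCyclic_of_injective _ hinj
  obtain ⟨g, hg⟩ := IsAddCyclic.exists_generator (α := Λ)
  refine ⟨g, fun x hx => ?_⟩
  obtain ⟨m, hm⟩ := AddSubgroup.mem_zmultiples_iff.mp (hg ⟨x - x₀, hmem x hx⟩)
  exact ⟨m, eq_add_of_sub_eq' (congrArg Subtype.val hm).symm⟩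

end lattice

section maxAbs

variable {ι : Type*} [Fintype ι]

def maxAbs (v : ι → ℤ) : ℕ := univ.sup fun i => (v i).natAbs

lemma natAbs_le_maxAbs (v : ι → ℤ) (i : ι) : (v i).natAbs ≤ maxAbs v :=
  le_sup (f := fun i => (v i).natAbs) (mem_univ i)

lemma maxAbs_pos {v : ι → ℤ} (hv : v ≠ 0) : 0 < maxAbs v := by
  obtain ⟨i, hi⟩ := Function.ne_iff.mp hv
  exact (Int.natAbs_pos.mpr hi).trans_le (natAbs_le_maxAbs v i)

def maxSteps (n : ℕ) (v : ι → ℤ) : ℕ := (n - 1) / maxAbs v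

end maxAbs

variable {ι : Type*} [Fintype ι] [DecidableEq ι] {n : ℕ}

noncomputable def grid (n : ℕ) (ι : Type*) [Fintype ι] [DecidableEq ι] : Finset (ι → ℤ) :=
  Fintype.piFinset fun _ => Icc 1 (n : ℤ)

lemma mem_grid {z : ι → ℤ} : z ∈ grid n ι ↔ ∀ i, 1 ≤ z i ∧ z i ≤ n := by
  simp [grid]

lemma card_grid : #(grid n ι) = n ^ Fintype.card ι := by
  simp [grid]

lemma natAbs_mul_maxAbs_le {x v : ι → ℤ} {m : ℤ} (hx : x ∈ grid n ι)
    (hxm : x + m • v ∈ grid n ι) : m.natAbs * maxAbs v ≤ n - 1 := by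
  rcases Nat.eq_zero_or_pos m.natAbs with hm | hm
  · simp [hm]
  rw [mul_comm, ← Nat.le_div_iff_mul_le hm]
  refine Finset.sup_le fun i _ => (Nat.le_div_iff_mul_le hm).2 ?_
  have h1 := mem_grid.1 hx i
  have h2 := mem_grid.1 hxm i
  simp only [Pi.add_apply, Pi.smul_apply, smul_eq_mul] at h2
  rw [mul_comm, ← Int.natAbs_mul]
  omega

lemma le_maxSteps {x v : ι → ℤ} {u : ℕ} (hv : v ≠ 0) (hx : x ∈ grid n ι)
    (hxu : x + (u : ℤ) • v ∈ grid n ι) : u ≤ maxSteps n v :=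
  (Nat.le_div_iff_mul_le (maxAbs_pos hv)).2 (by simpa using natAbs_mul_maxAbs_le hx hxu)

lemma add_smul_mem_grid_of_le {x v : ι → ℤ} {j u : ℤ} (hx : x ∈ grid n ι)
    (hxu : x + u • v ∈ grid n ι) (hj : 0 ≤ j) (hju : j ≤ u) : x + j • v ∈ grid n ι := by
  rw [mem_grid] at *
  intro i
  have h1 := hx i
  have h2 := hxu i
  simp only [Pi.add_apply, Pi.smul_apply, smul_eq_mul] at h2 ⊢
  rcases le_total 0 (v i) with hv | hv
  · have := mul_le_mul_of_nonneg_right hju hv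
    have := mul_nonneg hj hv
    constructor <;> linarith
  · have := mul_le_mul_of_nonpos_right hju hv
    have := mul_nonpos_of_nonneg_of_nonpos hj hv
    constructor <;> linarith

lemma exists_lineStart {x₀ v : ι → ℤ} (hx₀ : x₀ ∈ grid n ι) (hv : v ≠ 0) :
    ∃ m₀ : ℤ, x₀ + m₀ • v ∈ grid n ι ∧ x₀ + (m₀ - 1) • v ∉ grid n ι ∧
      ∀ m : ℤ, x₀ + m • v ∈ grid n ι → m₀ ≤ m := by
  have hbdd : ∀ m : ℤ, x₀ + m • v ∈ grid n ι → -(n : ℤ) ≤ m := fun m hm => by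
    have := (Nat.le_mul_of_pos_right _ (maxAbs_pos hv)).trans (natAbs_mul_maxAbs_le hx₀ hm)
    omega
  obtain ⟨m₀, hm₀, hleast⟩ := Int.exists_least_of_bdd ⟨_, hbdd⟩ ⟨0, by simpa using hx₀⟩
  exact ⟨m₀, hm₀, fun h => by linarith [hleast _ h], hleast⟩

/-- The grid points `b` that are the first grid point of their line in direction `v`. -/
noncomputable def lineStarts (n : ℕ) (v : ι → ℤ) : Finset (ι → ℤ) :=
  (grid n ι).filter fun b => b - v ∉ grid n ι

/-- For `b` in the grid and `v ≠ 0` the cap `u ≤ maxSteps n v` is automatic (`le_maxSteps`);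
it bounds the number of parameters by `maxSteps n v + 1`. -/
noncomputable def rayParams (n : ℕ) (v b : ι → ℤ) : Finset ℕ :=
  (range (maxSteps n v + 1)).filter fun u => b + (u : ℤ) • v ∈ grid n ι

lemma eq_of_add_smul_eq {v b b' : ι → ℤ} {u u' : ℕ} (hb : b ∈ grid n ι)
    (hb' : b' - v ∉ grid n ι) (hu : b + (u : ℤ) • v ∈ grid n ι) (hle : u' ≤ u)
    (h : b + (u : ℤ) • v = b' + (u' : ℤ) • v) : u = u' := by
  by_contra hne
  apply hb'
  have : b' - v = b + ((u : ℤ) - u' - 1) • v := by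
    rw [eq_sub_of_add_eq h.symm]
    module
  rw [this]
  exact add_smul_mem_grid_of_le hb hu (by omega) (by omega)

lemma sum_card_rayParams_le (v : ι → ℤ) :
    ∑ b ∈ lineStarts n v, #(rayParams n v b) ≤ n ^ Fintype.card ι := by
  rw [← card_sigma, ← card_grid]
  refine card_le_card_of_injOn (fun p => p.1 + (p.2 : ℤ) • v) (fun p hp => ?_) ?_
  · exact (mem_filter.1 (mem_sigma.1 hp).2).2
  rintro ⟨b, u⟩ hp ⟨b', u'⟩ hp' h
  simp only [coe_sigma, Set.mem_sigma_iff, lineStarts, rayParams, coe_filter,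
    Set.mem_ofPred_eq] at hp hp' h
  obtain rfl : u = u' := by
    rcases le_total u' u with hle | hle
    · exact eq_of_add_smul_eq hp.1.1 hp'.1.2 hp.2.2 hle h
    · exact (eq_of_add_smul_eq hp'.1.1 hp.1.2 hp'.2.2 hle h.symm).symm
  obtain rfl : b = b' := add_right_cancel h
  rfl

lemma factorial_mul_sum_choose_le (v : ι → ℤ) {r : ℕ} (hr : r ≠ 0) :
    r ! * ∑ b ∈ lineStarts n v, (#(rayParams n v b)).choose r
      ≤ n ^ Fintype.card ι * maxSteps n v ^ (r - 1) := by
  rw [mul_sum]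
  calc ∑ b ∈ lineStarts n v, r ! * (#(rayParams n v b)).choose r
      ≤ ∑ b ∈ lineStarts n v, #(rayParams n v b) * maxSteps n v ^ (r - 1) := by
        refine sum_le_sum fun b _ => factorial_mul_choose_le_mul_pow ?_ hr
        exact (card_filter_le _ _).trans (card_range _).le
    _ ≤ n ^ Fintype.card ι * maxSteps n v ^ (r - 1) := by
        rw [← sum_mul]
        exact Nat.mul_le_mul_right _ (sum_card_rayParams_le v)

noncomputable def directions (n : ℕ) (ι : Type*) [Fintype ι] [DecidableEq ι] :
    Finset (ι → ℤ) :=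
  (Fintype.piFinset fun _ => Icc (-(n : ℤ)) n).erase 0

lemma mem_directions {v : ι → ℤ} : v ∈ directions n ι ↔ v ≠ 0 ∧ maxAbs v ≤ n := by
  simp only [directions, mem_erase, Fintype.mem_piFinset, mem_Icc, maxAbs, Finset.sup_le_iff,
    mem_univ, true_implies]
  refine and_congr_right fun _ => forall_congr' fun i => ?_
  omega

lemma card_filter_maxAbs_eq_le (s : Finset (ι → ℤ)) {a : ℕ} (ha : 0 < a) :
    #(s.filter fun v => maxAbs v = a)
      ≤ Fintype.card ι * (2 * (2 * a + 1) ^ (Fintype.card ι - 1)) := by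
  let box : Finset ℤ := Icc (-(a : ℤ)) a
  let face (i : ι) : Finset (ι → ℤ) :=
    Fintype.piFinset (Function.update (fun _ => box) i ({-(a : ℤ), (a : ℤ)} : Finset ℤ))
  have hsub : s.filter (fun v => maxAbs v = a) ⊆ univ.biUnion face := by
    intro v hv
    have hva := (mem_filter.1 hv).2
    obtain ⟨i₀, -, -⟩ := Finset.lt_sup_iff.1 (hva ▸ ha : 0 < maxAbs v)
    obtain ⟨i, -, hi⟩ := exists_mem_eq_sup univ ⟨i₀, mem_univ _⟩ fun i => (v i).natAbs
    refine mem_biUnion.2 ⟨i, mem_univ _, Fintype.mem_piFinset.2 fun j => ?_⟩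
    have hj := natAbs_le_maxAbs v j
    rcases eq_or_ne j i with rfl | hji
    · simp only [Function.update_self, mem_insert, mem_singleton]
      have : (v j).natAbs = a := hva ▸ hi.symm
      omega
    · simp only [Function.update_of_ne hji, box, mem_Icc]
      omega
  have hface (i : ι) : #(face i) = 2 * (2 * a + 1) ^ (Fintype.card ι - 1) := by
    have hpair : #({-(a : ℤ), (a : ℤ)} : Finset ℤ) = 2 := card_pair (by omega)
    have hbox : #box = 2 * a + 1 := by
      rw [Int.card_Icc]
      omega
    simp only [face, Fintype.card_piFinset, Function.apply_update (fun _ (t : Finset ℤ) => #t),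
      prod_update_of_mem (mem_univ i), hpair, hbox, prod_const, card_sdiff, card_univ]
    simp
  calc _ ≤ #(univ.biUnion face) := card_le_card hsub
    _ ≤ ∑ i, #(face i) := card_biUnion_le
    _ = _ := by simp [hface]

lemma sq_mul_card_mul_pow_le {a c d r : ℕ} (ha : 0 < a) (hr : d + 1 < r)
    (hc : c ≤ d * (2 * (2 * a + 1) ^ (d - 1))) :
    a ^ 2 * (c * ((n - 1) / a) ^ (r - 1)) ≤ 2 * d * 3 ^ (d - 1) * n ^ (r - 1) := by
  set W := (n - 1) / a
  have hda : d * a ^ (d - 1) * a ^ 2 ≤ d * a ^ (r - 1) := by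
    rcases Nat.eq_zero_or_pos d with rfl | hd
    · simp
    rw [mul_assoc, ← pow_add]
    exact Nat.mul_le_mul_left _ (Nat.pow_le_pow_right ha (by omega))
  have haW : a * W ≤ n := (Nat.mul_div_le (n - 1) a).trans (Nat.sub_le n 1)
  calc a ^ 2 * (c * W ^ (r - 1))
      ≤ a ^ 2 * (d * (2 * (3 * a) ^ (d - 1)) * W ^ (r - 1)) := by
        gcongr
        exact hc.trans (by gcongr; omega)
    _ = 2 * 3 ^ (d - 1) * (d * a ^ (d - 1) * a ^ 2) * W ^ (r - 1) := by ring
    _ ≤ 2 * 3 ^ (d - 1) * (d * a ^ (r - 1)) * W ^ (r - 1) := by gcongr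
    _ = 2 * d * 3 ^ (d - 1) * (a * W) ^ (r - 1) := by ring
    _ ≤ 2 * d * 3 ^ (d - 1) * n ^ (r - 1) := by gcongr

lemma sum_maxSteps_pow_le {r : ℕ} (hr : Fintype.card ι + 1 < r) :
    ∑ v ∈ directions n ι, maxSteps n v ^ (r - 1)
      ≤ 4 * Fintype.card ι * 3 ^ (Fintype.card ι - 1) * n ^ (r - 1) := by
  set d := Fintype.card ι
  set C := 2 * d * 3 ^ (d - 1) * n ^ (r - 1)
  have hmaps : ∀ v ∈ directions n ι, maxAbs v ∈ Ioo 0 (n + 1) := fun v hv => by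
    obtain ⟨hv0, hvn⟩ := mem_directions.1 hv
    exact mem_Ioo.2 ⟨maxAbs_pos hv0, Nat.lt_succ_of_le hvn⟩
  have hfiber : ∀ a ∈ Ioo 0 (n + 1),
      ((∑ v ∈ (directions n ι).filter (fun v => maxAbs v = a), maxSteps n v ^ (r - 1) : ℕ) : ℝ)
        ≤ C * ((a : ℝ) ^ 2)⁻¹ := fun a ha => by
    have ha0 : 0 < a := (mem_Ioo.1 ha).1
    rw [← div_eq_mul_inv, le_div_iff₀ (by positivity), mul_comm]
    have hconst : ∀ v ∈ (directions n ι).filter (fun v => maxAbs v = a),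
        maxSteps n v ^ (r - 1) = ((n - 1) / a) ^ (r - 1) := fun v hv => by
      rw [maxSteps, (mem_filter.1 hv).2]
    rw [sum_congr rfl hconst, sum_const, smul_eq_mul]
    exact_mod_cast sq_mul_card_mul_pow_le ha0 hr (card_filter_maxAbs_eq_le _ ha0)
  have hreal : ((∑ v ∈ directions n ι, maxSteps n v ^ (r - 1) : ℕ) : ℝ) ≤ 2 * C := by
    rw [← sum_fiberwise_of_maps_to hmaps, Nat.cast_sum]
    calc ∑ a ∈ Ioo 0 (n + 1), _ ≤ ∑ a ∈ Ioo 0 (n + 1), C * ((a : ℝ) ^ 2)⁻¹ := sum_le_sum hfiber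
      _ = C * ∑ a ∈ Ioo 0 (n + 1), ((a : ℝ) ^ 2)⁻¹ := (mul_sum ..).symm
      _ ≤ C * 2 := by
        gcongr
        simpa using sum_Ioo_inv_sq_le (α := ℝ) 0 (n + 1)
      _ = 2 * C := mul_comm _ _
  calc _ ≤ 2 * C := by exact_mod_cast hreal
    _ = _ := by ring

lemma exists_ray_of_collinear {P : Finset (ι → ℤ)} (hP : P ⊆ grid n ι) (hP2 : 1 < #P)
    (hcol : Collinear ℝ (castPi ι '' P)) :
    ∃ v ∈ directions n ι, ∃ b ∈ lineStarts n v, ∃ U ⊆ rayParams n v b,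
      P = U.image fun u : ℕ => b + (u : ℤ) • v := by
  obtain ⟨x₀, hx₀, y, hy, hne⟩ := one_lt_card.1 hP2
  obtain ⟨v, hv⟩ := exists_eq_add_zsmul_of_collinear (mem_coe.2 hx₀) hcol
  have hv0 : v ≠ 0 := by
    rintro rfl
    obtain ⟨m, hm⟩ := hv y hy
    exact hne (by simpa using hm.symm)
  obtain ⟨m₀, hb, hbv, hleast⟩ := exists_lineStart (hP hx₀) hv0
  set b := x₀ + m₀ • v
  have hray : ∀ x ∈ P, ∃ u : ℕ, x = b + (u : ℤ) • v := fun x hx => by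
    obtain ⟨m, rfl⟩ := hv x hx
    refine ⟨(m - m₀).toNat, ?_⟩
    rw [Int.toNat_of_nonneg (by linarith [hleast m (hP hx)])]
    module
  have hbv' : b - v ∉ grid n ι := by
    rwa [show b - v = x₀ + (m₀ - 1) • v by module]
  have hvn : maxAbs v ≤ n := by
    obtain ⟨x, hx, hxb⟩ := exists_mem_ne hP2 b
    obtain ⟨u, rfl⟩ := hray x hx
    have hu : u ≠ 0 := by
      rintro rfl
      simp at hxb
    have := natAbs_mul_maxAbs_le hb (hP hx)
    rw [Int.natAbs_natCast] at this
    exact (Nat.le_mul_of_pos_left _ (Nat.pos_of_ne_zero hu)).trans (this.trans (Nat.sub_le n 1))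
  refine ⟨v, mem_directions.2 ⟨hv0, hvn⟩, b, mem_filter.2 ⟨hb, hbv'⟩,
    (rayParams n v b).filter fun u => b + (u : ℤ) • v ∈ P, filter_subset _ _, ?_⟩
  ext x
  simp only [mem_image, mem_filter]
  constructor
  · intro hx
    obtain ⟨u, rfl⟩ := hray x hx
    refine ⟨u, ⟨?_, hx⟩, rfl⟩
    exact mem_filter.2 ⟨mem_range.2 (Nat.lt_succ_of_le (le_maxSteps hv0 hb (hP hx))), hP hx⟩
  · rintro ⟨u, ⟨-, hu⟩, rfl⟩
    exact hu

lemma exists_grid_preimage {x : ι → ℝ} (hx : ∀ i, ∃ m : ℕ, 1 ≤ m ∧ m ≤ n ∧ x i = m) :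
    ∃ z ∈ grid n ι, castPi ι z = x := by
  choose m hm using hx
  refine ⟨fun i => m i, mem_grid.2 fun i => ?_, funext fun i => ?_⟩
  · exact ⟨by exact_mod_cast (hm i).1, by exact_mod_cast (hm i).2.1⟩
  · simp [(hm i).2.2]

def collinearSubsets (n r : ℕ) (ι : Type*) : Set (Finset (ι → ℝ)) :=
  {T | (∀ x ∈ T, ∀ i, ∃ m : ℕ, 1 ≤ m ∧ m ≤ n ∧ x i = m) ∧
    T.card = r ∧ Collinear ℝ (↑T : Set (ι → ℝ))}

lemma ncard_collinearSubsets_le {r : ℕ} (hr : 1 < r) :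
    (collinearSubsets n r ι).ncard
      ≤ ∑ v ∈ directions n ι, ∑ b ∈ lineStarts n v, (#(rayParams n v b)).choose r := by
  classical
  let F := (directions n ι).biUnion fun v => (lineStarts n v).biUnion fun b =>
    (powersetCard r (rayParams n v b)).image fun U =>
      U.image fun u : ℕ => castPi ι (b + (u : ℤ) • v)
  have hcover : collinearSubsets n r ι ⊆ F := by
    rintro T ⟨hgrid, hcard, hcol⟩
    let P := (grid n ι).filter fun z => castPi ι z ∈ T
    have hPT : P.image (castPi ι) = T := by
      ext x
      simp only [P, mem_image, mem_filter]
      refine ⟨fun ⟨z, ⟨_, hz⟩, hzx⟩ => hzx ▸ hz, fun hx => ?_⟩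
      obtain ⟨z, hz, rfl⟩ := exists_grid_preimage (hgrid x hx)
      exact ⟨z, ⟨hz, hx⟩, rfl⟩
    have hPcard : #P = r := by
      rw [← hcard, ← hPT, card_image_of_injective _ castPi_injective]
    have hPcol : Collinear ℝ (castPi ι '' P) := by rwa [← coe_image, hPT]
    obtain ⟨v, hv, b, hb, U, hU, hPU⟩ :=
      exists_ray_of_collinear (P := P) (filter_subset _ _) (hPcard ▸ hr) hPcol
    have hline : Function.Injective fun u : ℕ => b + (u : ℤ) • v :=
      (add_right_injective b).comp
        ((smul_left_injective ℤ (mem_directions.1 hv).1).comp Nat.cast_injective)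
    simp only [F, coe_biUnion, mem_coe, Set.mem_iUnion, mem_image, mem_powersetCard]
    refine ⟨v, hv, b, hb, U, ⟨hU, ?_⟩, ?_⟩
    · rw [← hPcard, hPU, card_image_of_injective _ hline]
    · rw [← hPT, hPU, image_image]
      rfl
  calc _ ≤ #F := (Set.ncard_le_ncard hcover F.finite_toSet).trans_eq (Set.ncard_coe_finset F)
    _ ≤ ∑ v ∈ directions n ι, ∑ b ∈ lineStarts n v, #((powersetCard r (rayParams n v b)).image
          fun U => U.image fun u : ℕ => castPi ι (b + (u : ℤ) • v)) :=
        card_biUnion_le.trans (sum_le_sum fun v _ => card_biUnion_le)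
    _ ≤ _ := by
      gcongr
      exact card_image_le.trans (card_powersetCard _ _).le

lemma factorial_mul_ncard_collinearSubsets_le {r : ℕ} (hr : Fintype.card ι + 1 < r) :
    r ! * (collinearSubsets n r ι).ncard
      ≤ Fintype.card ι * (4 * 3 ^ (Fintype.card ι - 1)) * n ^ (r + Fintype.card ι - 1) := by
  set d := Fintype.card ι
  calc _ ≤ r ! * ∑ v ∈ directions n ι, ∑ b ∈ lineStarts n v, (#(rayParams n v b)).choose r := by
        gcongr
        exact ncard_collinearSubsets_le (by omega)
    _ ≤ ∑ v ∈ directions n ι, n ^ d * maxSteps n v ^ (r - 1) := by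
        rw [mul_sum]
        exact sum_le_sum fun v _ => factorial_mul_sum_choose_le v (by omega)
    _ ≤ n ^ d * (4 * d * 3 ^ (d - 1) * n ^ (r - 1)) := by
        rw [← mul_sum]
        gcongr
        exact sum_maxSteps_pow_le hr
    _ = d * (4 * 3 ^ (d - 1)) * n ^ (r + d - 1) := by
        rw [show r + d - 1 = d + (r - 1) by omega, pow_add]
        ring

end GridLine

theorem collinear_tuples_grid_bound_large_r_general (n k r : ℕ) (hr : k + 1 < r) :
    (({T : Finset (Fin k → ℝ) |
        (∀ x ∈ T, ∀ i, ∃ m : ℕ, 1 ≤ m ∧ m ≤ n ∧ x i = m) ∧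
        T.card = r ∧ Collinear ℝ (↑T : Set (Fin k → ℝ))}.ncard : ℝ))
      ≤ (k : ℝ) * 2 ^ (r + k + 1) / (r.factorial : ℝ) * (n : ℝ) ^ (r + k - 1) := by
  have hcount := GridLine.factorial_mul_ncard_collinearSubsets_le (n := n) (ι := Fin k)
    (by rwa [Fintype.card_fin])
  rw [Fintype.card_fin] at hcount
  have hconst : 4 * 3 ^ (k - 1) ≤ 2 ^ (r + k + 1) :=
    calc 4 * 3 ^ (k - 1) ≤ 2 ^ 2 * (2 ^ 2) ^ (k - 1) := by gcongr <;> norm_num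
      _ ≤ 2 ^ (r + k + 1) := by
        rw [← pow_mul, ← pow_add]
        exact Nat.pow_le_pow_right (by norm_num) (by omega)
  have key : r ! * (GridLine.collinearSubsets n r (Fin k)).ncard
      ≤ k * 2 ^ (r + k + 1) * n ^ (r + k - 1) := hcount.trans (by gcongr)
  rw [div_mul_eq_mul_div, le_div_iff₀ (by positivity)]
  exact_mod_cast (Nat.mul_comm _ _).trans_le key

/-- For `n ≥ k ≥ 3` and `r > k+1`, the number of collinear `r`-element subsets of the
grid `[n]^k = {1,…,n}^k` is at most `(k·2^(r+k+1)/r!)·n^(r+k-1)`. -/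
theorem collinear_tuples_grid_bound_large_r (n k r : ℕ) (hk : 3 ≤ k) (hkn : k ≤ n)
    (hr : k + 1 < r) :
    (({T : Finset (Fin k → ℝ) |
        (∀ x ∈ T, ∀ i, ∃ m : ℕ, 1 ≤ m ∧ m ≤ n ∧ x i = m) ∧
        T.card = r ∧ Collinear ℝ (↑T : Set (Fin k → ℝ))}.ncard : ℝ))
      ≤ (k : ℝ) * 2 ^ (r + k + 1) / (r.factorial : ℝ) * (n : ℝ) ^ (r + k - 1) :=
  collinear_tuples_grid_bound_large_r_general n k r hr
end

section
/- For all integers n ≥ k ≥ 3 and 3 ≤ r ≤ k, the number of collinear r-tuples of points in the grid [n]^k is at most (k·2^{r+k}/r!)·n^{2k}. -/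
/-!
Let `T` be a collinear `r`-set in the grid, with extreme points `a ≠ c`. The other `r - 2`
points are lattice points strictly between `a` and `c`; by Bézout there are fewer than
`q = gcd (c - a)` of these, and `q` divides every coordinate of `c - a`. Hence the number of
sets is at most `∑_q C(q - 1, r - 2) · N_q`, where `N_q ≤ (2 n² / q)^k` counts the pairs of grid
points that are congruent modulo `q`. As `C(q - 1, r - 2) ≤ q^(r - 2) / (r - 2)!` and `r ≤ k`,
the `q`-th term is at most `2^k n^(2k) / ((r - 2)! q²)`, and `∑_{q ≥ 2} 1 / q² ≤ 1`.
-/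

open Finset
open scoped Nat

theorem Collinear.exists_subset_segment {𝕜 E : Type*} [Field 𝕜] [LinearOrder 𝕜]
    [IsStrictOrderedRing 𝕜] [AddCommGroup E] [Module 𝕜 E] {s : Finset E}
    (hs : Collinear 𝕜 (s : Set E)) (hne : s.Nonempty) :
    ∃ a ∈ s, ∃ c ∈ s, (s : Set E) ⊆ segment 𝕜 a c := by
  obtain ⟨p₀, v, hv⟩ := (collinear_iff_exists_forall_eq_smul_vadd _).mp hs
  choose! t ht using hv
  have hL : ∀ p ∈ s, AffineMap.lineMap p₀ (v +ᵥ p₀) (t p) = p := fun p hp => by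
    rw [AffineMap.lineMap_apply, vadd_vsub]
    exact (ht p hp).symm
  obtain ⟨a, ha, hmin⟩ := s.exists_min_image t hne
  obtain ⟨c, hc, hmax⟩ := s.exists_max_image t hne
  refine ⟨a, ha, c, hc, fun x hx => ?_⟩
  rw [← hL a ha, ← hL c hc, ← image_segment, segment_eq_Icc (hmin c hc)]
  exact ⟨t x, ⟨hmin x hx, hmax x hx⟩, hL x hx⟩

theorem Int.card_Icc_filter_modEq_le (n q : ℕ) (hq : 0 < q) (x : ℤ) :
    #{y ∈ Icc 1 (n : ℤ) | x ≡ y [ZMOD q]} ≤ n / q + 1 := by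
  have hq' : (0 : ℤ) < q := by exact_mod_cast hq
  calc #{y ∈ Icc 1 (n : ℤ) | x ≡ y [ZMOD q]} ≤ #(Icc 0 ((n : ℤ) / q)) := by
        refine card_le_card_of_injOn (· / (q : ℤ)) (fun y hy => ?_) fun y hy y' hy' h => ?_
        · obtain ⟨hy1, hyn⟩ := mem_Icc.mp (mem_filter.mp hy).1
          exact mem_Icc.mpr ⟨Int.ediv_nonneg (by omega) hq'.le, Int.ediv_le_ediv hq' hyn⟩
        · have hmod : y % q = y' % q := ((mem_filter.mp hy).2.symm.trans (mem_filter.mp hy').2)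
          rw [← Int.mul_ediv_add_emod y q, ← Int.mul_ediv_add_emod y' q, hmod]
          simp only at h
          rw [h]
    _ = n / q + 1 := by
        rw [Int.card_Icc, sub_zero, ← Int.natCast_ediv, ← Nat.cast_add_one, Int.toNat_natCast]

theorem sum_Icc_inv_sq_le_one (n : ℕ) : ∑ q ∈ Icc 2 n, ((q : ℝ) ^ 2)⁻¹ ≤ 1 := by
  have := sum_Ioo_inv_sq_le (α := ℝ) 1 (n + 1)
  norm_num at this
  rwa [show Icc 2 n = Ioo 1 (n + 1) by ext; simp; omega]

theorem choose_mul_div_pow_le {q s m : ℕ} (hq : 0 < q) (hsm : s + 2 ≤ m) (x : ℝ) (hx : 0 ≤ x) :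
    ((q - 1).choose s : ℝ) * (x / q) ^ m ≤ x ^ m / s ! * ((q : ℝ) ^ 2)⁻¹ := by
  have hq1 : (1 : ℝ) ≤ q := by exact_mod_cast hq
  have hpow : (q : ℝ) ^ s * (q : ℝ) ^ 2 ≤ (q : ℝ) ^ m := by
    rw [← pow_add]; exact pow_le_pow_right₀ hq1 hsm
  calc ((q - 1).choose s : ℝ) * (x / q) ^ m ≤ (q : ℝ) ^ s / s ! * (x / q) ^ m := by
        gcongr
        refine (Nat.choose_le_pow_div s (q - 1)).trans ?_
        gcongr
        exact_mod_cast Nat.sub_le q 1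
    _ = x ^ m / s ! * ((q : ℝ) ^ s / (q : ℝ) ^ m) := by
        rw [div_pow]; ring
    _ ≤ x ^ m / s ! * ((q : ℝ) ^ 2)⁻¹ := by
        gcongr
        rw [inv_eq_one_div, div_le_div_iff₀ (by positivity) (by positivity)]
        linarith

theorem two_pow_div_factorial_le {r k : ℕ} (hr : 2 ≤ r) (hrk : r ≤ k) :
    (2 : ℝ) ^ k / (r - 2)! ≤ k * 2 ^ (r + k) / r ! := by
  obtain ⟨s, rfl⟩ : ∃ s, r = s + 2 := ⟨r - 2, by omega⟩
  have hnat : (s + 2) * (s + 1) ≤ k * 2 ^ (s + 2) :=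
    Nat.mul_le_mul hrk ((Nat.lt_two_pow_self).le.trans (Nat.pow_le_pow_right two_pos (by omega)))
  rw [Nat.add_sub_cancel, div_le_div_iff₀ (by positivity) (by positivity), Nat.factorial_succ,
    Nat.factorial_succ, pow_add]
  push_cast
  have : ((s + 2 : ℕ) : ℝ) * (s + 1 : ℕ) ≤ k * 2 ^ (s + 2) := by exact_mod_cast hnat
  push_cast at this
  nlinarith [this, show (0 : ℝ) < 2 ^ k * (s ! : ℝ) by positivity]

namespace CollinearGrid

variable {ι : Type*}

def toReal (x : ι → ℤ) : ι → ℝ := fun i => x i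

theorem toReal_injective : Function.Injective (toReal : (ι → ℤ) → ι → ℝ) := fun _ _ h =>
  funext fun i => Int.cast_injective (congrFun h i)

theorem exists_sub_eq_mul_of_mem_openSegment {a c x : ι → ℤ}
    (hx : toReal x ∈ openSegment ℝ (toReal a) (toReal c)) :
    ∃ θ : ℝ, 0 < θ ∧ θ < 1 ∧ ∀ i, ((x i - a i : ℤ) : ℝ) = θ * (c i - a i : ℤ) := by
  rw [openSegment_eq_image'] at hx
  obtain ⟨θ, ⟨hθ0, hθ1⟩, hθ⟩ := hx
  refine ⟨θ, hθ0, hθ1, fun i => ?_⟩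
  have := congrFun hθ i
  simp only [toReal, Pi.add_apply, Pi.smul_apply, Pi.sub_apply, smul_eq_mul] at this
  push_cast
  linarith

variable [Fintype ι]

theorem exists_modEq_card_lt_of_subset_openSegment {a c : ι → ℤ} (hac : a ≠ c)
    {X : Finset (ι → ℤ)} (hX : ∀ x ∈ X, toReal x ∈ openSegment ℝ (toReal a) (toReal c)) :
    ∃ q : ℕ, #X < q ∧ ∀ i, a i ≡ c i [ZMOD q] := by
  obtain ⟨w, hw⟩ := univ.gcd_eq_sum_mul (c - a)
  set g := univ.gcd (c - a)
  have hg : 0 < g := by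
    refine lt_of_le_of_ne (Int.nonneg_of_normalize_eq_self Finset.normalize_gcd) fun h => hac ?_
    funext i
    have := (gcd_eq_zero_iff.mp h.symm) i (mem_univ i)
    simp only [Pi.sub_apply] at this
    omega
  refine ⟨g.toNat, ?_, fun i => ?_⟩
  · -- By Bézout `f x = θ g` is an integer: the parameter `θ` of a lattice point of the
    -- segment is a multiple of `1 / g`.
    let f : (ι → ℤ) → ℤ := fun x => ∑ i, (x i - a i) * w i
    have key : ∀ x ∈ X, 0 < f x ∧ f x < g ∧ ∀ i, g * (x i - a i) = f x * (c i - a i) := by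
      intro x hx
      obtain ⟨θ, hθ0, hθ1, hxi⟩ := exists_sub_eq_mul_of_mem_openSegment (hX x hx)
      have hf : (f x : ℝ) = θ * g := by
        simp only [f, hw, Int.cast_sum, Int.cast_mul, hxi, mul_assoc, ← mul_sum, Pi.sub_apply]
      have hgR : (0 : ℝ) < g := by exact_mod_cast hg
      refine ⟨?_, ?_, fun i => ?_⟩
      · have : (0 : ℝ) < f x := by rw [hf]; positivity
        exact_mod_cast this
      · have : (f x : ℝ) < g := by rw [hf]; nlinarith
        exact_mod_cast this
      · have : ((g * (x i - a i) : ℤ) : ℝ) = ((f x * (c i - a i) : ℤ) : ℝ) := by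
          rw [Int.cast_mul, Int.cast_mul, hxi, hf]; ring
        exact_mod_cast this
    have hinj : Set.InjOn f X := fun x hx y hy hxy => funext fun i => by
      have : g * (x i - a i) = g * (y i - a i) := by rw [(key x hx).2.2, (key y hy).2.2, hxy]
      have := mul_left_cancel₀ hg.ne' this
      omega
    have := card_le_card_of_injOn f (fun x hx => mem_Ioo.2 ⟨(key x hx).1, (key x hx).2.1⟩) hinj
    rw [Int.card_Ioo] at this
    omega
  · rw [Int.toNat_of_nonneg hg.le, Int.modEq_iff_dvd]
    exact gcd_dvd (mem_univ i)

variable [DecidableEq ι]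

variable (ι) in
noncomputable def grid (n : ℕ) : Finset (ι → ℤ) := Fintype.piFinset fun _ => Icc 1 (n : ℤ)

theorem mem_grid {n : ℕ} {x : ι → ℤ} : x ∈ grid ι n ↔ ∀ i, 1 ≤ x i ∧ x i ≤ n := by
  simp [grid]

open Classical in
noncomputable def latticeBetween (n : ℕ) (a c : ι → ℤ) : Finset (ι → ℤ) :=
  {x ∈ grid ι n | toReal x ∈ openSegment ℝ (toReal a) (toReal c)}

theorem mem_latticeBetween {n : ℕ} {a c x : ι → ℤ} :
    x ∈ latticeBetween n a c ↔
      x ∈ grid ι n ∧ toReal x ∈ openSegment ℝ (toReal a) (toReal c) := by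
  classical
  unfold latticeBetween
  exact mem_filter

theorem choose_card_latticeBetween_le {n s : ℕ} (hs : 0 < s) {a c : ι → ℤ} (ha : a ∈ grid ι n)
    (hc : c ∈ grid ι n) (hac : a ≠ c) :
    (#(latticeBetween n a c)).choose s ≤
      ∑ q ∈ Icc 2 n, if ∀ i, a i ≡ c i [ZMOD q] then (q - 1).choose s else 0 := by
  obtain ⟨q, hcard, hmod⟩ := exists_modEq_card_lt_of_subset_openSegment hac
    (X := latticeBetween n a c) fun x hx => (mem_latticeBetween.mp hx).2
  rcases lt_or_ge #(latticeBetween n a c) s with hlt | hge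
  · rw [Nat.choose_eq_zero_of_lt hlt]
    exact Nat.zero_le _
  obtain ⟨j, hj⟩ := Function.ne_iff.mp hac
  have hqn : q ≤ n := by
    have := Int.natAbs_le_of_dvd_ne_zero (Int.modEq_iff_dvd.mp (hmod j))
      (sub_ne_zero.mpr hj.symm)
    have := mem_grid.mp ha j
    have := mem_grid.mp hc j
    omega
  refine le_trans ?_ (single_le_sum (fun q _ => Nat.zero_le _) (mem_Icc.mpr ⟨by omega, hqn⟩))
  rw [if_pos hmod]
  exact Nat.choose_le_choose s (by omega)

theorem exists_eq_insert_insert_of_collinear {n : ℕ} {T : Finset (ι → ℤ)} (hT : T ⊆ grid ι n)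
    (hcard : 2 ≤ #T) (hcol : Collinear ℝ (T.image toReal : Set (ι → ℝ))) :
    ∃ p ∈ (grid ι n).offDiag, ∃ R ∈ (latticeBetween n p.1 p.2).powersetCard (#T - 2),
      insert p.1 (insert p.2 R) = T := by
  obtain ⟨_, ha', _, hc', hseg⟩ :=
    hcol.exists_subset_segment ((card_pos.mp (by omega)).image toReal)
  obtain ⟨a, ha, rfl⟩ := mem_image.mp ha'
  obtain ⟨c, hc, rfl⟩ := mem_image.mp hc'
  have hseg' : ∀ x ∈ T, toReal x ∈ segment ℝ (toReal a) (toReal c) := fun x hx =>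
    hseg (mem_image_of_mem toReal hx)
  have hac : a ≠ c := by
    rintro rfl
    have : T ⊆ {a} := fun x hx => mem_singleton.mpr
      (toReal_injective (by simpa using hseg' x hx))
    have := card_le_card this
    simp only [card_singleton] at this
    omega
  have hca : c ∈ T.erase a := mem_erase.mpr ⟨hac.symm, hc⟩
  refine ⟨(a, c), mem_offDiag.mpr ⟨hT ha, hT hc, hac⟩, (T.erase a).erase c,
    mem_powersetCard.mpr ⟨fun x hx => ?_, ?_⟩, by rw [insert_erase hca, insert_erase ha]⟩
  · obtain ⟨hxc, hxa, hx⟩ := by simpa only [mem_erase] using hx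
    exact mem_latticeBetween.mpr ⟨hT hx, mem_openSegment_of_ne_left_right
      (toReal_injective.ne (Ne.symm hxa)) (toReal_injective.ne (Ne.symm hxc)) (hseg' x hx)⟩
  · rw [card_erase_of_mem hca, card_erase_of_mem ha]
    omega

theorem ncard_collinear_le_sum_choose (n r : ℕ) (hr : 2 ≤ r) :
    {T : Finset (ι → ℝ) | (∀ x ∈ T, ∀ i, ∃ m : ℕ, 1 ≤ m ∧ m ≤ n ∧ x i = m) ∧
        T.card = r ∧ Collinear ℝ (T : Set (ι → ℝ))}.ncard ≤
      ∑ p ∈ (grid ι n).offDiag, (#(latticeBetween n p.1 p.2)).choose (r - 2) := by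
  let F := (grid ι n).offDiag.sigma fun p => (latticeBetween n p.1 p.2).powersetCard (r - 2)
  let realize : (Σ _ : (ι → ℤ) × (ι → ℤ), Finset (ι → ℤ)) → Finset (ι → ℝ) :=
    fun P => (insert P.1.1 (insert P.1.2 P.2)).image toReal
  calc _ ≤ #(F.image realize) := by
        rw [← Set.ncard_coe_finset]
        refine Set.ncard_le_ncard ?_ (Finset.finite_toSet _)
        rintro T ⟨hgrid, hcard, hcol⟩
        have hTgrid : T ⊆ (grid ι n).image toReal := fun x hx => by
          choose m hm using hgrid x hx
          refine mem_image.mpr ⟨fun i => m i, mem_grid.mpr fun i => ?_, funext fun i => ?_⟩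
          · exact ⟨by exact_mod_cast (hm i).1, by exact_mod_cast (hm i).2.1⟩
          · simp [toReal, (hm i).2.2]
        obtain ⟨T, hTsub, rfl⟩ := subset_image_iff.mp hTgrid
        rw [card_image_of_injective _ toReal_injective] at hcard
        obtain ⟨p, hp, R, hR, hpR⟩ :=
          exists_eq_insert_insert_of_collinear hTsub (by omega) hcol
        exact mem_image.mpr ⟨⟨p, R⟩, mem_sigma.mpr ⟨hp, hcard ▸ hR⟩, by simp only [realize, hpR]⟩
    _ ≤ #F := card_image_le
    _ = _ := by
        rw [card_sigma]
        simp only [card_powersetCard]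

variable (ι) in
noncomputable def congrPairs (n q : ℕ) : Finset ((ι → ℤ) × (ι → ℤ)) :=
  {p ∈ grid ι n ×ˢ grid ι n | ∀ i, p.1 i ≡ p.2 i [ZMOD q]}

theorem sum_choose_card_latticeBetween_le (n s : ℕ) (hs : 0 < s) :
    ∑ p ∈ (grid ι n).offDiag, (#(latticeBetween n p.1 p.2)).choose s ≤
      ∑ q ∈ Icc 2 n, (q - 1).choose s * #(congrPairs ι n q) :=
  calc ∑ p ∈ (grid ι n).offDiag, (#(latticeBetween n p.1 p.2)).choose s
      ≤ ∑ p ∈ (grid ι n).offDiag, ∑ q ∈ Icc 2 n,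
          if ∀ i, p.1 i ≡ p.2 i [ZMOD q] then (q - 1).choose s else 0 :=
        sum_le_sum fun p hp => by
          obtain ⟨ha, hc, hac⟩ := mem_offDiag.mp hp
          exact choose_card_latticeBetween_le hs ha hc hac
    _ ≤ ∑ p ∈ grid ι n ×ˢ grid ι n, ∑ q ∈ Icc 2 n,
          if ∀ i, p.1 i ≡ p.2 i [ZMOD q] then (q - 1).choose s else 0 :=
        sum_le_sum_of_subset (by rw [← product_sdiff_diag]; exact sdiff_subset)
    _ = _ := by
        rw [sum_comm]
        refine sum_congr rfl fun q _ => ?_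
        rw [← sum_filter, sum_const, smul_eq_mul, mul_comm, congrPairs]

theorem card_congrPairs_le (n q : ℕ) (hq : 0 < q) :
    #(congrPairs ι n q) ≤ (n * (n / q + 1)) ^ Fintype.card ι := by
  set P : Finset (ℤ × ℤ) := {p ∈ Icc 1 (n : ℤ) ×ˢ Icc 1 (n : ℤ) | p.1 ≡ p.2 [ZMOD q]}
  have hP : #P ≤ n * (n / q + 1) := by
    calc #P = ∑ x ∈ Icc 1 (n : ℤ), #{y ∈ Icc 1 (n : ℤ) | x ≡ y [ZMOD q]} := by
          rw [card_filter, sum_product]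
          simp only [card_filter]
      _ ≤ #(Icc 1 (n : ℤ)) * (n / q + 1) :=
          sum_le_card_nsmul _ _ _ fun x _ => Int.card_Icc_filter_modEq_le n q hq x
      _ = n * (n / q + 1) := by simp
  calc #(congrPairs ι n q) ≤ #(Fintype.piFinset fun _ : ι => P) := by
        refine card_le_card_of_injOn (fun p i => (p.1 i, p.2 i)) (fun p hp => ?_)
          fun p _ p' _ h => ?_
        · simp only [mem_coe, congrPairs, grid, mem_filter, mem_product, Fintype.mem_piFinset, P]
            at hp ⊢
          exact fun i => ⟨⟨hp.1.1 i, hp.1.2 i⟩, hp.2 i⟩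
        · simp only [funext_iff, Prod.ext_iff] at h
          exact Prod.ext (funext fun i => (h i).1) (funext fun i => (h i).2)
    _ = #P ^ Fintype.card ι := by rw [Fintype.card_piFinset, prod_const, card_univ]
    _ ≤ (n * (n / q + 1)) ^ Fintype.card ι := Nat.pow_le_pow_left hP _

theorem cast_card_congrPairs_le {n q : ℕ} (hq : 0 < q) (hqn : q ≤ n) :
    (#(congrPairs ι n q) : ℝ) ≤ (2 * n ^ 2 / q) ^ Fintype.card ι := by
  have hqR : (0 : ℝ) < q := by exact_mod_cast hq
  have hdiv : ((n / q : ℕ) : ℝ) + 1 ≤ 2 * n / q := by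
    have hqn' : (q : ℝ) ≤ n := by exact_mod_cast hqn
    have : (n : ℝ) / q + 1 ≤ 2 * n / q := by
      rw [div_add_one hqR.ne', div_le_div_iff_of_pos_right hqR]; linarith
    linarith [Nat.cast_div_le (α := ℝ) (m := n) (n := q)]
  calc (#(congrPairs ι n q) : ℝ) ≤ ((n * (n / q + 1) : ℕ) : ℝ) ^ Fintype.card ι := by
        exact_mod_cast card_congrPairs_le n q hq
    _ ≤ (2 * n ^ 2 / q) ^ Fintype.card ι := by
        gcongr
        push_cast
        calc (n : ℝ) * ((n / q : ℕ) + 1) ≤ n * (2 * n / q) := by gcongr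
          _ = 2 * n ^ 2 / q := by ring

theorem sum_choose_mul_card_congrPairs_le (n s : ℕ) (hs : s + 2 ≤ Fintype.card ι) :
    ∑ q ∈ Icc 2 n, ((q - 1).choose s * #(congrPairs ι n q) : ℝ) ≤
      2 ^ Fintype.card ι * n ^ (2 * Fintype.card ι) / s ! := by
  set m := Fintype.card ι
  calc ∑ q ∈ Icc 2 n, ((q - 1).choose s * #(congrPairs ι n q) : ℝ)
      ≤ ∑ q ∈ Icc 2 n, (2 * n ^ 2 : ℝ) ^ m / s ! * ((q : ℝ) ^ 2)⁻¹ := by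
        refine sum_le_sum fun q hq => ?_
        obtain ⟨hq2, hqn⟩ := mem_Icc.mp hq
        calc ((q - 1).choose s * #(congrPairs ι n q) : ℝ)
            ≤ (q - 1).choose s * (2 * n ^ 2 / q) ^ m := by
              gcongr; exact cast_card_congrPairs_le (by omega) hqn
          _ ≤ _ := choose_mul_div_pow_le (by omega) hs _ (by positivity)
    _ = (2 * n ^ 2 : ℝ) ^ m / s ! * ∑ q ∈ Icc 2 n, ((q : ℝ) ^ 2)⁻¹ := by rw [mul_sum]
    _ ≤ (2 * n ^ 2 : ℝ) ^ m / s ! :=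
        mul_le_of_le_one_right (by positivity) (sum_Icc_inv_sq_le_one n)
    _ = 2 ^ m * n ^ (2 * m) / s ! := by rw [mul_pow, pow_mul]

end CollinearGrid

open CollinearGrid in
theorem collinear_tuples_grid_bound_small_r_general (n k r : ℕ) (hr3 : 3 ≤ r) (hrk : r ≤ k) :
    (({T : Finset (Fin k → ℝ) |
        (∀ x ∈ T, ∀ i, ∃ m : ℕ, 1 ≤ m ∧ m ≤ n ∧ x i = m) ∧
        T.card = r ∧ Collinear ℝ (↑T : Set (Fin k → ℝ))}.ncard : ℝ))
      ≤ (k : ℝ) * 2 ^ (r + k) / (r.factorial : ℝ) * (n : ℝ) ^ (2 * k) := by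
  have hcount := (ncard_collinear_le_sum_choose n r (by omega)).trans
    (sum_choose_card_latticeBetween_le (ι := Fin k) n (r - 2) (by omega))
  calc _ ≤ ∑ q ∈ Icc 2 n, ((q - 1).choose (r - 2) * #(congrPairs (Fin k) n q) : ℝ) := by
        exact_mod_cast hcount
    _ ≤ 2 ^ k * n ^ (2 * k) / (r - 2)! := by
        simpa using sum_choose_mul_card_congrPairs_le (ι := Fin k) n (r - 2)
          (by rw [Fintype.card_fin]; omega)
    _ ≤ _ := by
        rw [mul_div_right_comm]
        exact mul_le_mul_of_nonneg_right (two_pow_div_factorial_le (by omega) hrk) (by positivity)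

/-- For `n ≥ k ≥ 3` and `3 ≤ r ≤ k`, the number of collinear `r`-element subsets of the
grid `[n]^k = {1,…,n}^k` is at most `(k·2^(r+k)/r!)·n^(2k)`. -/
theorem collinear_tuples_grid_bound_small_r (n k r : ℕ) (hk : 3 ≤ k) (hkn : k ≤ n)
    (hr3 : 3 ≤ r) (hrk : r ≤ k) :
    (({T : Finset (Fin k → ℝ) |
        (∀ x ∈ T, ∀ i, ∃ m : ℕ, 1 ≤ m ∧ m ≤ n ∧ x i = m) ∧
        T.card = r ∧ Collinear ℝ (↑T : Set (Fin k → ℝ))}.ncard : ℝ))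
      ≤ (k : ℝ) * 2 ^ (r + k) / (r.factorial : ℝ) * (n : ℝ) ^ (2 * k) :=
  collinear_tuples_grid_bound_small_r_general n k r hr3 hrk
end

section
/- Let t ≥ 1 and n be such that 2n/t ≥ 17, and let k ≥ 2. Define V = {(a₁,…,a_k) ∈ ℤ^k : n/t ≤ a₁ ≤ 2n/t, 0 ≤ a₂,…,a_k < a₁, a₁ prime}. Then for every point x ∈ [n]^k and every v ∈ V, there exists u ∈ ℤ^k with 1 ≤ u₁ ≤ 2n/t and −n ≤ u₂,…,u_k ≤ n such that x lies on the line {u + αv : α ∈ ℝ}. -/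
/-- Every point `x ∈ [n]^k` lies on a line with direction `v ∈ V` passing through a
point `u` with `1 ≤ u₁ ≤ 2n/t` and `-n ≤ uᵢ ≤ n` for `i ≥ 2`, where `V` consists of
integer vectors with prime first coordinate `a₁ ∈ [n/t, 2n/t]` and `0 ≤ aᵢ < a₁`. -/
theorem line_through_grid_point (n k : ℕ) [NeZero k] (t : ℝ) (ht : 1 ≤ t)
    (hnt : 17 ≤ 2 * (n : ℝ) / t) (hk : 2 ≤ k)
    (v : Fin k → ℤ) (hv1 : Prime (v 0))
    (hv2 : (n : ℝ) / t ≤ (v 0 : ℝ)) (hv3 : ((v 0 : ℝ)) ≤ 2 * (n : ℝ) / t)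
    (hv4 : ∀ i, i ≠ 0 → 0 ≤ v i ∧ v i < v 0)
    (x : Fin k → ℤ) (hx : ∀ i, 1 ≤ x i ∧ x i ≤ (n : ℤ)) :
    ∃ u : Fin k → ℤ,
      (1 ≤ u 0 ∧ ((u 0 : ℝ)) ≤ 2 * (n : ℝ) / t) ∧
      (∀ i, i ≠ 0 → -(n : ℤ) ≤ u i ∧ u i ≤ (n : ℤ)) ∧
      ∃ α : ℝ, (fun i => (x i : ℝ)) = (fun i => (u i : ℝ)) + α • (fun i => (v i : ℝ)) := by
  have hv0pos : 0 < v 0 := by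
    have h2 : 2 * ((n : ℝ) / t) = 2 * (n : ℝ) / t := by ring
    have : (0 : ℝ) < (v 0 : ℝ) := by linarith
    exact_mod_cast this
  set j : ℤ := (x 0 - 1) / v 0 with hj
  have hm0 : 0 ≤ x 0 - 1 := by linarith [(hx 0).1]
  have hjnn : 0 ≤ j := Int.ediv_nonneg hm0 hv0pos.le
  have hmod := Int.emod_lt_of_pos (x 0 - 1) hv0pos
  have hmodnn := Int.emod_nonneg (x 0 - 1) hv0pos.ne'
  have hdm := Int.mul_ediv_add_emod (x 0 - 1) (v 0)
  have hjv : j * v 0 ≤ x 0 - 1 := by rw [hj, mul_comm]; omega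
  have hjv2 : x 0 - 1 - j * v 0 < v 0 := by rw [hj, mul_comm]; omega
  refine ⟨fun i => x i - j * v i, ⟨?_, ?_⟩, ?_, (j : ℝ), ?_⟩
  · show 1 ≤ x 0 - j * v 0; omega
  · show ((x 0 - j * v 0 : ℤ) : ℝ) ≤ 2 * (n : ℝ) / t
    have h1 : x 0 - j * v 0 ≤ v 0 := by omega
    have : ((x 0 - j * v 0 : ℤ) : ℝ) ≤ (v 0 : ℝ) := by exact_mod_cast h1
    linarith
  · intro i hi
    obtain ⟨h1, h2⟩ := hv4 i hi
    obtain ⟨hx1, hx2⟩ := hx i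
    have hjvle : j * v i ≤ j * v 0 := mul_le_mul_of_nonneg_left h2.le hjnn
    have hjvnn : 0 ≤ j * v i := mul_nonneg hjnn h1
    have hxn : j * v 0 ≤ (n : ℤ) - 1 := by linarith [(hx 0).2]
    exact ⟨by show -(n:ℤ) ≤ x i - j * v i; omega, by show x i - j * v i ≤ (n:ℤ); omega⟩
  · funext i
    simp only [Pi.add_apply, Pi.smul_apply, smul_eq_mul]
    push_cast
    ring
end

section
/- For all real s ∈ [0, 0.9], integers k, r ≥ 3, and natural numbers n ≥ max(e^{100k}, r^{100}): every set S of n^{k−s} points in the grid [n]^k contains at least n^{2k−(k+1)s} / (r^{k+1} · (1000·9^k)^{k+1} · log n) collinear r-tuples. -/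
/-!
For a direction `d ∈ [1,t]^k` with coprime coordinates, the lines of direction `d` through
`[n]^k` are indexed by their first point, which lies in one of `k` slabs of size `t n^{k-1}`.
A line meeting `S` in `m` points carries `C(m,r) ≥ m - r` collinear `r`-sets, so direction `d`
alone yields at least `|S| - r k t n^{k-1}` of them, and distinct primitive directions never yield
the same `r`-set. For `k ≥ 3` at least half of `[1,t]^k` is primitive, since
`∑_{g ≥ 2} g^{-k} ≤ 1/2`. With `t ≈ n^{1-s}/(2kr)` the error term is at most `|S|/2`, giving
`≳ t^k n^{k-s} ≈ n^{2k-(k+1)s}/(4kr)^k` collinear `r`-sets, more than claimed.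
-/

open Finset

lemma Nat.le_choose_add_self (m : ℕ) {r : ℕ} (hr : 0 < r) : m ≤ m.choose r + r := by
  obtain ⟨r, rfl⟩ : ∃ r', r = r' + 1 := ⟨r - 1, by omega⟩
  induction m with
  | zero => omega
  | succ m ih =>
    rw [Nat.choose_succ_succ']
    rcases le_or_gt r m with h | h
    · have := Nat.choose_pos h
      omega
    · omega

namespace CollinearGrid

lemma eq_of_forall_mul_eq_mul_of_gcd_eq_one {ι : Type*} [Fintype ι] {d d' : ι → ℕ}
    (hd : univ.gcd d = 1) (hd' : univ.gcd d' = 1) {a a' : ℕ} (ha : a ≠ 0)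
    (h : ∀ i, a * d i = a' * d' i) : d = d' := by
  have haa' : a = a' := by
    simpa [Finset.gcd_mul_left, hd, hd'] using congrArg univ.gcd (funext h)
  subst haa'
  exact funext fun i => Nat.eq_of_mul_eq_mul_left (Nat.pos_of_ne_zero ha) (h i)

def primitiveVectors (k t : ℕ) : Finset (Fin k → ℕ) :=
  {d ∈ Fintype.piFinset fun _ => Icc 1 t | univ.gcd d = 1}

lemma card_filter_gcd_ne_one_le (k t : ℕ) [NeZero k] :
    #{d ∈ Fintype.piFinset (fun _ : Fin k => Icc 1 t) | univ.gcd d ≠ 1}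
      ≤ ∑ g ∈ Ioc 1 t, (t / g) ^ k := by
  calc _ ≤ #((Ioc 1 t).biUnion fun g =>
          Fintype.piFinset fun _ : Fin k => {x ∈ Icc 1 t | g ∣ x}) := by
        refine card_le_card fun d hd => ?_
        simp only [mem_filter, Fintype.mem_piFinset, mem_Icc] at hd
        obtain ⟨hdt, hg⟩ := hd
        have hdvd : ∀ i, univ.gcd d ∣ d i := fun i => gcd_dvd (mem_univ i)
        have hgt : univ.gcd d ≤ t := (Nat.le_of_dvd (hdt 0).1 (hdvd 0)).trans (hdt 0).2
        have hg0 : 0 < univ.gcd d := Nat.pos_of_dvd_of_pos (hdvd 0) (hdt 0).1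
        simp only [mem_biUnion, mem_Ioc, Fintype.mem_piFinset, mem_filter, mem_Icc]
        exact ⟨univ.gcd d, ⟨by omega, hgt⟩, fun i => ⟨hdt i, hdvd i⟩⟩
    _ ≤ ∑ g ∈ Ioc 1 t, #(Fintype.piFinset fun _ : Fin k => {x ∈ Icc 1 t | g ∣ x}) :=
        card_biUnion_le
    _ = ∑ g ∈ Ioc 1 t, (t / g) ^ k := by
        refine sum_congr rfl fun g _ => ?_
        rw [Fintype.card_piFinset, prod_const, card_univ, Fintype.card_fin,
          ← Nat.Ioc_filter_dvd_card_eq_div]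
        rfl

lemma sum_Ioc_inv_pow_le_half {k : ℕ} (hk : 3 ≤ k) (t : ℕ) :
    ∑ g ∈ Ioc 1 t, ((g : ℝ) ^ k)⁻¹ ≤ 1 / 2 := by
  calc ∑ g ∈ Ioc 1 t, ((g : ℝ) ^ k)⁻¹
        ≤ ∑ g ∈ Ioc 1 t, 1 / 2 * ((g : ℝ) ^ 2)⁻¹ := by
        refine sum_le_sum fun g hg => ?_
        have hg2 : (2 : ℝ) ≤ g := by exact_mod_cast (mem_Ioc.1 hg).1
        calc ((g : ℝ) ^ k)⁻¹ ≤ ((g : ℝ) ^ 3)⁻¹ :=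
              inv_anti₀ (by positivity) (pow_le_pow_right₀ (by linarith) hk)
          _ ≤ (2 * (g : ℝ) ^ 2)⁻¹ := by
              gcongr
              nlinarith
          _ = 1 / 2 * ((g : ℝ) ^ 2)⁻¹ := by ring
    _ = 1 / 2 * ∑ g ∈ Ioc 1 t, ((g : ℝ) ^ 2)⁻¹ := (mul_sum _ _ _).symm
    _ ≤ 1 / 2 * 1 := by
        gcongr
        rcases Nat.eq_zero_or_pos t with rfl | ht
        · simp
        · have := sum_Ioc_inv_sq_le_sub one_ne_zero ht (α := ℝ)
          have : (0 : ℝ) ≤ (t : ℝ)⁻¹ := by positivity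
          push_cast at *
          linarith
    _ = 1 / 2 := mul_one _

lemma half_pow_le_card_primitiveVectors {k : ℕ} (hk : 3 ≤ k) (t : ℕ) :
    (t : ℝ) ^ k / 2 ≤ #(primitiveVectors k t) := by
  have : NeZero k := ⟨by omega⟩
  have hsplit := card_filter_add_card_filter_not
    (s := Fintype.piFinset fun _ : Fin k => Icc 1 t) (fun d => univ.gcd d = 1)
  rw [Fintype.card_piFinset, prod_const, card_univ, Fintype.card_fin, Nat.card_Icc,
    add_tsub_cancel_right] at hsplit
  have hbad : (#{d ∈ Fintype.piFinset (fun _ : Fin k => Icc 1 t) | univ.gcd d ≠ 1} : ℝ)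
      ≤ (t : ℝ) ^ k / 2 :=
    calc _ ≤ ∑ g ∈ Ioc 1 t, ((t / g : ℕ) : ℝ) ^ k := by
          exact_mod_cast card_filter_gcd_ne_one_le k t
      _ ≤ ∑ g ∈ Ioc 1 t, (t : ℝ) ^ k * ((g : ℝ) ^ k)⁻¹ := by
          gcongr with g
          rw [← div_eq_mul_inv, ← div_pow]
          gcongr
          exact Nat.cast_div_le
      _ = (t : ℝ) ^ k * ∑ g ∈ Ioc 1 t, ((g : ℝ) ^ k)⁻¹ := (mul_sum _ _ _).symm
      _ ≤ (t : ℝ) ^ k * (1 / 2) := by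
          gcongr
          exact sum_Ioc_inv_pow_le_half hk t
      _ = (t : ℝ) ^ k / 2 := by ring
  have : ((#(primitiveVectors k t) + #{d ∈ Fintype.piFinset (fun _ : Fin k => Icc 1 t) |
      univ.gcd d ≠ 1} : ℕ) : ℝ) = (t : ℝ) ^ k := by exact_mod_cast hsplit
  push_cast at this
  linarith

abbrev gridEmbedding (k : ℕ) : (Fin k → ℕ) ↪ (Fin k → ℝ) :=
  Function.Embedding.piCongrRight fun _ => Nat.castEmbedding

lemma exists_map_gridEmbedding_eq {k n : ℕ} {S : Finset (Fin k → ℝ)}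
    (hgrid : ∀ x ∈ S, ∀ i, ∃ m : ℕ, 1 ≤ m ∧ m ≤ n ∧ x i = m) :
    ∃ S₀ : Finset (Fin k → ℕ),
      S₀ ⊆ Fintype.piFinset (fun _ => Icc 1 n) ∧ S₀.map (gridEmbedding k) = S := by
  refine ⟨S.image fun x i => ⌊x i⌋₊, fun p hp => ?_, ?_⟩
  · obtain ⟨x, hx, rfl⟩ := mem_image.1 hp
    refine Fintype.mem_piFinset.2 fun i => ?_
    obtain ⟨m, h1, h2, hm⟩ := hgrid x hx i
    rw [hm, Nat.floor_natCast]
    exact mem_Icc.2 ⟨h1, h2⟩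
  · rw [map_eq_image, image_image]
    conv_rhs => rw [← image_id (s := S)]
    refine image_congr fun x hx => funext fun i => ?_
    obtain ⟨m, -, -, hm⟩ := hgrid x hx i
    simp [hm]

variable {k : ℕ} [NeZero k]

def lineStep (d p : Fin k → ℕ) : ℕ :=
  univ.inf' univ_nonempty fun i => (p i - 1) / d i

/-- The first point of `[1, ∞)^k` on the line through `p` in direction `d`. -/
def lineStart (d p : Fin k → ℕ) : Fin k → ℕ :=
  p - lineStep d p • d

lemma lineStep_mul_le (d p : Fin k → ℕ) (i : Fin k) : lineStep d p * d i ≤ p i - 1 :=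
  Nat.mul_le_of_le_div _ _ _ (inf'_le _ (mem_univ i))

lemma lineStart_add_smul (d p : Fin k → ℕ) : lineStart d p + lineStep d p • d = p := by
  funext i
  have := lineStep_mul_le d p i
  simp only [lineStart, Pi.add_apply, Pi.sub_apply, Pi.smul_apply, smul_eq_mul]
  omega

lemma one_le_lineStart {d p : Fin k → ℕ} {i : Fin k} (hp : 1 ≤ p i) :
    1 ≤ lineStart d p i := by
  have := lineStep_mul_le d p i
  simp only [lineStart, Pi.sub_apply, Pi.smul_apply, smul_eq_mul]
  omega

lemma exists_lineStart_le {d : Fin k → ℕ} (hd : ∀ i, 0 < d i) (p : Fin k → ℕ) :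
    ∃ i, lineStart d p i ≤ d i := by
  obtain ⟨i, -, hi⟩ := exists_mem_eq_inf' univ_nonempty fun i => (p i - 1) / d i
  refine ⟨i, ?_⟩
  have hdiv := Nat.div_add_mod (p i - 1) (d i)
  have hmod := Nat.mod_lt (p i - 1) (hd i)
  have hstep : lineStep d p * d i = d i * ((p i - 1) / d i) := by rw [lineStep, hi, mul_comm]
  simp only [lineStart, Pi.sub_apply, Pi.smul_apply, smul_eq_mul]
  omega

lemma sub_eq_mul_of_lineStart_eq {d p q : Fin k → ℕ} (h : lineStart d p = lineStart d q)
    (i : Fin k) : (p i : ℤ) - q i = ((lineStep d p : ℤ) - lineStep d q) * d i := by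
  have hp := congrFun (lineStart_add_smul d p) i
  have hq := congrFun (lineStart_add_smul d q) i
  rw [h] at hp
  simp only [Pi.add_apply, Pi.smul_apply, smul_eq_mul] at hp hq
  rw [← hp, ← hq]
  push_cast
  ring

lemma card_image_lineStart_le {S : Finset (Fin k → ℕ)} {n t : ℕ}
    (hS : S ⊆ Fintype.piFinset fun _ => Icc 1 n) {d : Fin k → ℕ}
    (hd : ∀ i, d i ∈ Icc 1 t) :
    #(S.image (lineStart d)) ≤ k * (t * n ^ (k - 1)) := by
  calc _ ≤ #(univ.biUnion fun i : Fin k =>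
          Fintype.piFinset fun j => if j = i then Icc 1 t else Icc 1 n) := by
        refine card_le_card fun b hb => ?_
        obtain ⟨p, hp, rfl⟩ := mem_image.1 hb
        simp only [mem_Icc] at hd
        obtain ⟨i, hi⟩ := exists_lineStart_le (fun i => (hd i).1) p
        simp only [mem_biUnion, mem_univ, true_and, Fintype.mem_piFinset]
        refine ⟨i, fun j => ?_⟩
        have hpj := mem_Icc.1 (Fintype.mem_piFinset.1 (hS hp) j)
        have hstart : lineStart d p j ≤ p j := tsub_le_self
        split_ifs with hji
        · subst hji
          exact mem_Icc.2 ⟨one_le_lineStart hpj.1, hi.trans (hd j).2⟩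
        · exact mem_Icc.2 ⟨one_le_lineStart hpj.1, hstart.trans hpj.2⟩
    _ ≤ ∑ i : Fin k, #(Fintype.piFinset fun j => if j = i then Icc 1 t else Icc 1 n) :=
        card_biUnion_le
    _ = k * (t * n ^ (k - 1)) := by
        simp only [Fintype.card_piFinset, apply_ite card, Nat.card_Icc, add_tsub_cancel_right,
          prod_ite, prod_const, filter_eq', filter_ne', mem_univ, if_true, card_singleton,
          pow_one, card_erase_of_mem, card_univ, Fintype.card_fin, sum_const, smul_eq_mul]

def lineSubsets (S : Finset (Fin k → ℕ)) (r : ℕ) (d : Fin k → ℕ) :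
    Finset (Finset (Fin k → ℕ)) :=
  (S.image (lineStart d)).biUnion fun b => {p ∈ S | lineStart d p = b}.powersetCard r

lemma mem_lineSubsets {S T : Finset (Fin k → ℕ)} {r : ℕ} (hr : r ≠ 0) {d : Fin k → ℕ} :
    T ∈ lineSubsets S r d ↔ T ⊆ S ∧ #T = r ∧ ∃ b, ∀ p ∈ T, lineStart d p = b := by
  simp only [lineSubsets, mem_biUnion, mem_image, mem_powersetCard, subset_iff, mem_filter]
  constructor
  · rintro ⟨b, -, hT, hcard⟩
    exact ⟨fun p hp => (hT hp).1, hcard, b, fun p hp => (hT hp).2⟩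
  · rintro ⟨hTS, hcard, b, hb⟩
    obtain ⟨p, hp⟩ := card_pos.1 (hcard ▸ Nat.pos_of_ne_zero hr)
    exact ⟨b, ⟨p, hTS hp, hb p hp⟩, fun q hq => ⟨hTS hq, hb q hq⟩, hcard⟩

lemma card_le_card_lineSubsets_add (S : Finset (Fin k → ℕ)) {r : ℕ} (hr : 0 < r)
    (d : Fin k → ℕ) : #S ≤ #(lineSubsets S r d) + r * #(S.image (lineStart d)) := by
  have hdisj : (S.image (lineStart d) : Set (Fin k → ℕ)).PairwiseDisjoint
      fun b => {p ∈ S | lineStart d p = b}.powersetCard r := by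
    intro b _ b' _ hne
    refine disjoint_left.2 fun T hT hT' => hne ?_
    rw [mem_powersetCard] at hT hT'
    obtain ⟨p, hp⟩ := card_pos.1 (hT.2 ▸ hr)
    exact (mem_filter.1 (hT.1 hp)).2.symm.trans (mem_filter.1 (hT'.1 hp)).2
  rw [lineSubsets, card_biUnion hdisj, card_eq_sum_card_image (lineStart d) S, mul_comm,
    ← smul_eq_mul, ← sum_const, ← sum_add_distrib]
  gcongr with b
  rw [card_powersetCard]
  exact Nat.le_choose_add_self _ hr

lemma disjoint_lineSubsets (S : Finset (Fin k → ℕ)) {r : ℕ} (hr : 2 ≤ r)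
    {d d' : Fin k → ℕ} (hd : univ.gcd d = 1) (hd' : univ.gcd d' = 1) (hne : d ≠ d') :
    Disjoint (lineSubsets S r d) (lineSubsets S r d') := by
  refine disjoint_left.2 fun T hT hT' => hne ?_
  obtain ⟨-, hcard, b, hb⟩ := (mem_lineSubsets (by omega)).1 hT
  obtain ⟨-, -, b', hb'⟩ := (mem_lineSubsets (by omega)).1 hT'
  obtain ⟨p, hp, q, hq, hpq⟩ := one_lt_card.1 (by omega : 1 < #T)
  have hsub := sub_eq_mul_of_lineStart_eq ((hb p hp).trans (hb q hq).symm)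
  have hsub' := sub_eq_mul_of_lineStart_eq ((hb' p hp).trans (hb' q hq).symm)
  refine eq_of_forall_mul_eq_mul_of_gcd_eq_one hd hd'
    (a := (lineStep d p - lineStep d q : ℤ).natAbs)
    (a' := (lineStep d' p - lineStep d' q : ℤ).natAbs)
    ?_ fun i => ?_
  · refine fun h0 => hpq (funext fun i => ?_)
    have := hsub i
    rw [Int.natAbs_eq_zero.1 h0, zero_mul] at this
    omega
  · have := congrArg Int.natAbs ((hsub i).symm.trans (hsub' i))
    rwa [Int.natAbs_mul, Int.natAbs_mul, Int.natAbs_natCast, Int.natAbs_natCast] at this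

lemma collinear_map_of_mem_lineSubsets {S T : Finset (Fin k → ℕ)} {r : ℕ} (hr : r ≠ 0)
    {d : Fin k → ℕ} (hT : T ∈ lineSubsets S r d) :
    Collinear ℝ (T.map (gridEmbedding k) : Set (Fin k → ℝ)) := by
  obtain ⟨-, -, b, hb⟩ := (mem_lineSubsets hr).1 hT
  rw [collinear_iff_exists_forall_eq_smul_vadd]
  refine ⟨gridEmbedding k b, gridEmbedding k d, ?_⟩
  simp only [coe_map, Set.forall_mem_image, mem_coe]
  intro p hp
  refine ⟨lineStep d p, funext fun i => ?_⟩
  have := congrFun (lineStart_add_smul d p) i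
  rw [hb p hp] at this
  simp only [← this, Function.Embedding.piCongrRight_apply, Nat.castEmbedding_apply,
    Pi.add_apply, Pi.smul_apply, smul_eq_mul, Pi.vadd_apply', vadd_eq_add, Nat.cast_add,
    Nat.cast_mul]
  ring

theorem card_primitiveVectors_mul_le_ncard_collinear {S : Finset (Fin k → ℕ)} {n : ℕ}
    (hS : S ⊆ Fintype.piFinset fun _ => Icc 1 n) {r : ℕ} (hr : 2 ≤ r) (t : ℕ) :
    (#(primitiveVectors k t) : ℝ) * (#S - r * (k * (t * n ^ (k - 1)))) ≤
      ({T : Finset (Fin k → ℝ) | T ⊆ S.map (gridEmbedding k) ∧ T.card = r ∧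
        Collinear ℝ (↑T : Set (Fin k → ℝ))}.ncard : ℝ) := by
  set 𝒯 := (primitiveVectors k t).biUnion (lineSubsets S r)
  have hprim : ∀ d ∈ primitiveVectors k t, (∀ i, d i ∈ Icc 1 t) ∧ univ.gcd d = 1 := by
    intro d hd
    simpa [primitiveVectors] using hd
  have hcard𝒯 : #𝒯 = ∑ d ∈ primitiveVectors k t, #(lineSubsets S r d) :=
    card_biUnion fun d hd d' hd' hne =>
      disjoint_lineSubsets S hr (hprim d hd).2 (hprim d' hd').2 hne
  set C : Set (Finset (Fin k → ℝ)) := {T | T ⊆ S.map (gridEmbedding k) ∧ T.card = r ∧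
    Collinear ℝ (↑T : Set (Fin k → ℝ))}
  have hsub : ↑(𝒯.image (·.map (gridEmbedding k))) ⊆ C := by
    simp only [coe_image, Set.image_subset_iff]
    intro T hT
    obtain ⟨d, -, hTd⟩ := mem_biUnion.1 hT
    obtain ⟨hTS, hcard, -⟩ := (mem_lineSubsets (by omega)).1 hTd
    exact ⟨map_subset_map.2 hTS, (card_map _).trans hcard,
      collinear_map_of_mem_lineSubsets (by omega) hTd⟩
  have hfin : C.Finite := (S.map (gridEmbedding k)).powerset.finite_toSet.subset
    fun T hT => mem_coe.2 (mem_powerset.2 hT.1)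
  calc _ = ∑ _d ∈ primitiveVectors k t, ((#S : ℝ) - r * (k * (t * n ^ (k - 1)))) := by
        rw [sum_const, nsmul_eq_mul]
    _ ≤ ∑ d ∈ primitiveVectors k t, (#(lineSubsets S r d) : ℝ) := by
        gcongr with d hd
        have hS_le : #S ≤ #(lineSubsets S r d) + r * (k * (t * n ^ (k - 1))) :=
          (card_le_card_lineSubsets_add S (by omega : 0 < r) d).trans
            (by gcongr; exact card_image_lineStart_le hS (hprim d hd).1)
        have : (#S : ℝ) ≤ #(lineSubsets S r d) + r * (k * (t * n ^ (k - 1))) := by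
          exact_mod_cast hS_le
        linarith
    _ = #(𝒯.image (·.map (gridEmbedding k))) := by
        rw [card_image_of_injective _ (map_injective _), hcard𝒯]
        push_cast
        rfl
    _ ≤ _ := by
        exact_mod_cast (Set.ncard_coe_finset _).symm.trans_le (Set.ncard_le_ncard hsub hfin)

end CollinearGrid

open CollinearGrid

lemma four_mul_mul_le_rpow {k r n : ℕ} {s : ℝ} (hs1 : s ≤ 0.9)
    (hn1 : Real.exp (100 * k) ≤ n) (hn2 : r ^ 100 ≤ n) : 4 * k * r ≤ (n : ℝ) ^ (1 - s) := by
  have hn : 1 ≤ (n : ℝ) := (Real.one_le_exp (by positivity)).trans hn1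
  have hk : (4 * k : ℝ) ≤ (n : ℝ) ^ (1 / 25 : ℝ) :=
    calc (4 * k : ℝ) ≤ Real.exp (4 * k) := by linarith [Real.add_one_le_exp (4 * k : ℝ)]
      _ = Real.exp (100 * k) ^ (1 / 25 : ℝ) := by rw [← Real.exp_mul]; ring_nf
      _ ≤ _ := by gcongr
  have hr : (r : ℝ) ≤ (n : ℝ) ^ (1 / 100 : ℝ) :=
    calc (r : ℝ) = ((r : ℝ) ^ 100) ^ ((100 : ℕ) : ℝ)⁻¹ :=
          (Real.pow_rpow_inv_natCast (by positivity) (by norm_num)).symm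
      _ ≤ (n : ℝ) ^ ((100 : ℕ) : ℝ)⁻¹ := by gcongr; exact_mod_cast hn2
      _ = _ := by norm_num
  calc (4 * k * r : ℝ) ≤ (n : ℝ) ^ (1 / 25 : ℝ) * (n : ℝ) ^ (1 / 100 : ℝ) := by gcongr
    _ = (n : ℝ) ^ (1 / 20 : ℝ) := by rw [← Real.rpow_add (by linarith)]; norm_num
    _ ≤ (n : ℝ) ^ (1 - s) := Real.rpow_le_rpow_of_exponent_le hn (by norm_num at hs1; linarith)

lemma exists_nat_scale {k r n : ℕ} {s : ℝ} (hk : 0 < k) (hr : 0 < r) (hn : 1 ≤ (n : ℝ))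
    (h : 4 * k * r ≤ (n : ℝ) ^ (1 - s)) :
    ∃ t : ℕ, (r : ℝ) * (k * (t * n ^ (k - 1))) ≤ (n : ℝ) ^ ((k : ℝ) - s) / 2 ∧
      (n : ℝ) ^ (1 - s) / (4 * k * r) ≤ t := by
  set x := (n : ℝ) ^ (1 - s) / (2 * k * r) with hx_def
  have hkr : (0 : ℝ) < k * r := by positivity
  have hx : 2 ≤ x := by rw [le_div_iff₀ (by positivity)]; linarith
  refine ⟨⌊x⌋₊, ?_, ?_⟩
  · calc (r : ℝ) * (k * (⌊x⌋₊ * n ^ (k - 1))) ≤ r * (k * (x * n ^ (k - 1))) := by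
          gcongr; exact Nat.floor_le (by linarith)
      _ = (n : ℝ) ^ (1 - s) * (n : ℝ) ^ ((k - 1 : ℕ) : ℝ) / 2 := by
          rw [Real.rpow_natCast, hx_def]
          field_simp
      _ = (n : ℝ) ^ ((k : ℝ) - s) / 2 := by
          rw [← Real.rpow_add (by linarith), Nat.cast_sub hk]
          ring_nf
  · have := Nat.sub_one_lt_floor x
    calc (n : ℝ) ^ (1 - s) / (4 * k * r) = x / 2 := by
          rw [hx_def]
          field_simp
          ring
      _ ≤ ⌊x⌋₊ := by linarith

lemma four_mul_pow_le {k r : ℕ} (hr : 1 ≤ r) {L : ℝ} (hL : 1 ≤ L) :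
    4 * (4 * k * r : ℝ) ^ k ≤ (r : ℝ) ^ (k + 1) * (1000 * 9 ^ k : ℝ) ^ (k + 1) * L := by
  have h9 : (1 : ℝ) ≤ 9 ^ k := one_le_pow₀ (by norm_num)
  have hk9 : (k : ℝ) ≤ 9 ^ k := by exact_mod_cast (Nat.lt_pow_self (by norm_num)).le
  have hr1 : (1 : ℝ) ≤ r := by exact_mod_cast hr
  have hX : (1000 : ℝ) ≤ r * (1000 * 9 ^ k) := by nlinarith
  calc 4 * (4 * k * r : ℝ) ^ k ≤ 4 * (r * (1000 * 9 ^ k)) ^ k := by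
        gcongr 4 * ?_ ^ k
        nlinarith
    _ ≤ (r * (1000 * 9 ^ k)) * L * (r * (1000 * 9 ^ k)) ^ k := by
        gcongr ?_ * _
        nlinarith
    _ = _ := by ring

theorem supersaturation_grid_general (s : ℝ) (hs1 : s ≤ 0.9)
    (k r n : ℕ) (hk : 3 ≤ k) (hr : 3 ≤ r)
    (hn1 : Real.exp (100 * k) ≤ (n : ℝ)) (hn2 : r ^ 100 ≤ n)
    (S : Finset (Fin k → ℝ))
    (hgrid : ∀ x ∈ S, ∀ i, ∃ m : ℕ, 1 ≤ m ∧ m ≤ n ∧ x i = m)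
    (hcard : (S.card : ℝ) = (n : ℝ) ^ ((k : ℝ) - s)) :
    (n : ℝ) ^ (2 * (k : ℝ) - ((k : ℝ) + 1) * s) /
        ((r : ℝ) ^ (k + 1) * (1000 * 9 ^ k : ℝ) ^ (k + 1) * Real.log n)
      ≤ ({T : Finset (Fin k → ℝ) |
            T ⊆ S ∧ T.card = r ∧ Collinear ℝ (↑T : Set (Fin k → ℝ))}.ncard : ℝ) := by
  have : NeZero k := ⟨by omega⟩
  have hn : 1 ≤ (n : ℝ) := (Real.one_le_exp (by positivity)).trans hn1
  have hk3 : (3 : ℝ) ≤ k := by exact_mod_cast hk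
  have hlog : 1 ≤ Real.log n := by
    rw [Real.le_log_iff_exp_le (by linarith)]
    exact (Real.exp_le_exp.2 (by linarith)).trans hn1
  obtain ⟨S, hS, rfl⟩ := exists_map_gridEmbedding_eq hgrid
  rw [card_map] at hcard
  obtain ⟨t, herr, ht⟩ :=
    exists_nat_scale (by omega : 0 < k) (by omega : 0 < r) hn (four_mul_mul_le_rpow hs1 hn1 hn2)
  have hexp : (n : ℝ) ^ (2 * (k : ℝ) - ((k : ℝ) + 1) * s) =
      ((n : ℝ) ^ (1 - s)) ^ k * (n : ℝ) ^ ((k : ℝ) - s) := by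
    rw [← Real.rpow_mul_natCast (by linarith), ← Real.rpow_add (by linarith)]
    ring_nf
  calc _ ≤ (n : ℝ) ^ (2 * (k : ℝ) - ((k : ℝ) + 1) * s) / (4 * (4 * k * r) ^ k) := by
        exact div_le_div_of_nonneg_left (by positivity) (by positivity)
          (four_mul_pow_le (k := k) (by omega) hlog)
    _ = ((n : ℝ) ^ (1 - s) / (4 * k * r)) ^ k / 2 * ((n : ℝ) ^ ((k : ℝ) - s) / 2) := by
        rw [hexp, div_pow]
        field_simp
        norm_num
    _ ≤ (t : ℝ) ^ k / 2 * (#S - r * (k * (t * n ^ (k - 1)))) := by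
        gcongr
        linarith
    _ ≤ #(primitiveVectors k t) * (#S - r * (k * (t * n ^ (k - 1)))) := by
        gcongr
        · linarith
        · exact half_pow_le_card_primitiveVectors hk t
    _ ≤ _ := card_primitiveVectors_mul_le_ncard_collinear hS (by omega) t

/-- Super-saturation: for `s ∈ [0,0.9]`, `k, r ≥ 3` and `n ≥ max(e^{100k}, r^{100})`,
every set `S` of `n^{k-s}` points of the grid `[n]^k` contains at least
`n^{2k-(k+1)s} / (r^{k+1}·(1000·9^k)^{k+1}·log n)` collinear `r`-element subsets. -/
theorem supersaturation_grid (s : ℝ) (hs0 : 0 ≤ s) (hs1 : s ≤ 0.9)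
    (k r n : ℕ) (hk : 3 ≤ k) (hr : 3 ≤ r)
    (hn1 : Real.exp (100 * k) ≤ (n : ℝ)) (hn2 : r ^ 100 ≤ n)
    (S : Finset (Fin k → ℝ))
    (hgrid : ∀ x ∈ S, ∀ i, ∃ m : ℕ, 1 ≤ m ∧ m ≤ n ∧ x i = m)
    (hcard : (S.card : ℝ) = (n : ℝ) ^ ((k : ℝ) - s)) :
    (n : ℝ) ^ (2 * (k : ℝ) - ((k : ℝ) + 1) * s) /
        ((r : ℝ) ^ (k + 1) * (1000 * 9 ^ k : ℝ) ^ (k + 1) * Real.log n)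
      ≤ ({T : Finset (Fin k → ℝ) |
            T ⊆ S ∧ T.card = r ∧ Collinear ℝ (↑T : Set (Fin k → ℝ))}.ncard : ℝ) :=
  supersaturation_grid_general s hs1 k r n hk hr hn1 hn2 S hgrid hcard
end

section
/- For integers q ≥ 3, the function T(k) = 1 + ((k−q+1)/k) / (k − (k−q+1)/k − 1), defined for real k > q−1, attains its maximum over positive integers k at k = 2q−3 and k = 2q−2, with T(2q−3) = T(2q−2) = 1 + 1/(4q−7). -/
lemma Tsimp (c : ℝ) (k : ℝ) (hk : k ≠ 0) (hD : k ^ 2 - 2 * k + c - 1 ≠ 0) :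
    1 + ((k - c + 1) / k) / (k - (k - c + 1) / k - 1)
      = 1 + (k - c + 1) / (k ^ 2 - 2 * k + c - 1) := by
  have hden : k - (k - c + 1) / k - 1 = (k ^ 2 - 2 * k + c - 1) / k := by
    field_simp; ring
  rw [hden]
  rw [div_div_div_eq]
  rw [mul_comm k, mul_div_mul_right _ _ hk]

/-- For integers `q ≥ 3`, the function
`T(k) = 1 + ((k-q+1)/k) / (k - (k-q+1)/k - 1)` (for real `k > q-1`) attains its
maximum over positive integers at `k = 2q-3` and `k = 2q-2`, where its value is
`1 + 1/(4q-7)`. -/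
theorem target_function_max (q : ℕ) (hq : 3 ≤ q) :
    (fun k : ℝ => 1 + ((k - q + 1) / k) / (k - (k - q + 1) / k - 1))
        (2 * (q : ℝ) - 3) = 1 + 1 / (4 * (q : ℝ) - 7) ∧
    (fun k : ℝ => 1 + ((k - q + 1) / k) / (k - (k - q + 1) / k - 1))
        (2 * (q : ℝ) - 2) = 1 + 1 / (4 * (q : ℝ) - 7) ∧
    ∀ m : ℕ, (q : ℝ) - 1 < (m : ℝ) →
      (fun k : ℝ => 1 + ((k - q + 1) / k) / (k - (k - q + 1) / k - 1)) (m : ℝ)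
        ≤ 1 + 1 / (4 * (q : ℝ) - 7) := by
  have hq3 : (3 : ℝ) ≤ (q : ℝ) := by exact_mod_cast hq
  have h47 : (4 * (q : ℝ) - 7) > 0 := by linarith
  refine ⟨?_, ?_, ?_⟩
  · simp only
    rw [Tsimp (q : ℝ) _ (by linarith) (by nlinarith)]
    have h1 : (2 * (q : ℝ) - 3) ^ 2 - 2 * (2 * (q : ℝ) - 3) + (q : ℝ) - 1
        = ((q : ℝ) - 2) * (4 * (q : ℝ) - 7) := by ring
    have h2 : 2 * (q : ℝ) - 3 - (q : ℝ) + 1 = (q : ℝ) - 2 := by ring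
    have hne : (q : ℝ) - 2 ≠ 0 := by linarith
    rw [h1, h2]
    field_simp
  · simp only
    rw [Tsimp (q : ℝ) _ (by linarith) (by nlinarith)]
    have h1 : (2 * (q : ℝ) - 2) ^ 2 - 2 * (2 * (q : ℝ) - 2) + (q : ℝ) - 1
        = ((q : ℝ) - 1) * (4 * (q : ℝ) - 7) := by ring
    have h2 : 2 * (q : ℝ) - 2 - (q : ℝ) + 1 = (q : ℝ) - 1 := by ring
    have hne : (q : ℝ) - 1 ≠ 0 := by linarith
    rw [h1, h2]
    field_simp
  · intro m hm
    simp only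
    set k : ℝ := (m : ℝ) with hk
    have hmq : q ≤ m := by
      by_contra h
      push_neg at h
      have : m + 1 ≤ q := h
      have := (Nat.cast_le (α := ℝ)).mpr this
      push_cast at this
      linarith
    have hk2 : (2 : ℝ) ≤ k := by linarith
    have hD : k ^ 2 - 2 * k + (q : ℝ) - 1 > 0 := by nlinarith
    have hroot : (k - (2 * (q : ℝ) - 3)) * (k - (2 * (q : ℝ) - 2)) ≥ 0 := by
      rcases le_or_gt m (2 * q - 3) with h | h
      · have : (m : ℝ) ≤ 2 * (q : ℝ) - 3 := by
          have := (Nat.cast_le (α := ℝ)).mpr h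
          push_cast [Nat.cast_sub (by omega : 3 ≤ 2 * q)] at this
          linarith
        nlinarith
      · have : 2 * (q : ℝ) - 2 ≤ (m : ℝ) := by
          have h' : 2 * q - 2 ≤ m := by omega
          have := (Nat.cast_le (α := ℝ)).mpr h'
          push_cast [Nat.cast_sub (by omega : 2 ≤ 2 * q)] at this
          linarith
        nlinarith
    rw [Tsimp (q : ℝ) k (by linarith) hD.ne']
    have : (k - (q : ℝ) + 1) / (k ^ 2 - 2 * k + (q : ℝ) - 1) ≤ 1 / (4 * (q : ℝ) - 7) := by
      rw [div_le_div_iff₀ hD h47]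
      nlinarith
    linarith
end
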